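/- arXiv:1504.01036 — 9 statements merged into one kernel-verified Lean document; each statement's English description precedes it below -/
import Mathlib

section
/- Let $C = \mathbb{R}_+ v_1 + \dots + \mathbb{R}_+ v_d \subset \mathbb{R}^d$ be a simplicial cone with extremal generators $v_1,\dots,v_d \in \mathbb{Z}^d$, let $F$ be a facet of $C$ and let $v$ be the extremal generator opposite to $F$. Let $\operatorname{ht}_F : \mathbb{R}^d \to \mathbb{R}$ be the facet-height function of $F$ and set $m = \operatorname{ht}_F(v)$. Then for each $j = 0, 1, \dots, m-1$, the semi-open parallelotope $\mathsf{par}(v_1,\dots,v_d)$ contains exactly $\mu(F)$ lattice points $x$ with $\operatorname{ht}_F(x) = j$, where $\mu(F)$ denotes the multiplicity of the facet $F$ (so that $\mu(C) = m \cdot \mu(F)$). -/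
/-!
Let `Λ = ℤv₁ + ⋯ + ℤv_d`. The lattice points of the semi-open parallelotope are exactly the
integer points of the fundamental domain of `Λ`, hence a system of representatives of `ℤ^d ⧸ Λ`,
a group of order `μ(C) = m·μ(F)`. The height `ht_F` maps `ℤ^d` onto `ℤ` and `Λ` into `mℤ`, so it
induces a surjection `ℤ^d ⧸ Λ → ℤ/m` all of whose fibres have `μ(F)` elements. On the
parallelotope `ht_F = m · (coordinate along v)` takes values in `[0, m)`, so the points of height
`j` are the representatives of the fibre over `j mod m`.
-/

open Set Module

theorem AddMonoidHom.card_preimage_singleton_mul_card {G H : Type*} [AddGroup G] [AddGroup H]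
    {f : G →+ H} (hf : Function.Surjective f) (y : H) :
    Nat.card (f ⁻¹' {y}) * Nat.card H = Nat.card G := by
  rw [Nat.card_congr (f.fiberEquivKerOfSurjective hf y), ← f.ker.card_mul_index,
    AddSubgroup.index_ker, f.range_eq_top_of_surjective hf, AddSubgroup.card_top]

theorem ZMod.intCast_eq_natCast_iff_of_lt {m j : ℕ} {a : ℤ} (ha : 0 ≤ a) (ham : a < m)
    (hj : j < m) : (a : ZMod m) = j ↔ a = j := by
  lift a to ℕ using ha
  rw [Int.cast_natCast, ZMod.natCast_eq_natCast_iff', Nat.mod_eq_of_lt (by omega),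
    Nat.mod_eq_of_lt hj]
  omega

theorem ZSpan.mem_fundamentalDomain_iff_exists_sum {ι E : Type*} [Fintype ι]
    [NormedAddCommGroup E] [NormedSpace ℝ E] (b : Basis ι ℝ E) (y : E) :
    y ∈ fundamentalDomain b ↔ ∃ a : ι → ℝ, (∀ i, 0 ≤ a i ∧ a i < 1) ∧ y = ∑ i, a i • b i := by
  constructor
  · intro hy
    exact ⟨b.repr y, fun i => hy i, (b.sum_repr y).symm⟩
  · rintro ⟨a, ha, rfl⟩ i
    rw [b.repr_sum_self]
    exact ha i

theorem Module.Basis.apply_eq_repr_mul_of_forall_ne {ι R M : Type*} [CommSemiring R]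
    [AddCommMonoid M] [Module R M] (b : Basis ι R M) (L : M →ₗ[R] R) {i₀ : ι}
    (hL : ∀ i, i ≠ i₀ → L (b i) = 0) (y : M) : L y = b.repr y i₀ * L (b i₀) := by
  classical
  have : L = L (b i₀) • b.coord i₀ := b.ext fun i => by
    by_cases hi : i = i₀
    · simp [hi]
    · simp [hL i hi, Ne.symm hi]
  conv_lhs => rw [this]
  simp [mul_comm]

theorem ZSpan.apply_mem_Ico_of_mem_fundamentalDomain {ι E : Type*} [Fintype ι]
    [NormedAddCommGroup E] [NormedSpace ℝ E] {b : Basis ι ℝ E} {L : E →ₗ[ℝ] ℝ} {i₀ : ι}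
    (hL : ∀ i, i ≠ i₀ → L (b i) = 0) (hpos : 0 < L (b i₀)) {y : E}
    (hy : y ∈ fundamentalDomain b) : L y ∈ Ico 0 (L (b i₀)) := by
  rw [b.apply_eq_repr_mul_of_forall_ne L hL y]
  obtain ⟨h0, h1⟩ := hy i₀
  exact ⟨mul_nonneg h0 hpos.le, mul_lt_of_lt_one_left hpos h1⟩

theorem AddMonoidHom.exists_intCast_comp_eq {G : Type*} [AddGroup G] (f : G →+ ℝ)
    (hf : ∀ x, ∃ n : ℤ, f x = n) : ∃ h : G →+ ℤ, ∀ x, (h x : ℝ) = f x := by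
  choose h hh using hf
  refine ⟨AddMonoidHom.mk' h fun x y => Int.cast_injective (α := ℝ) ?_, fun x => (hh x).symm⟩
  push_cast
  rw [← hh, ← hh, ← hh, map_add]

variable {ι : Type*}

variable (ι) in
def intVecToReal : (ι → ℤ) →+ (ι → ℝ) := (Int.castAddHom ℝ).compLeft ι

@[simp]
theorem intVecToReal_apply (x : ι → ℤ) : intVecToReal ι x = fun k => (x k : ℝ) := rfl

theorem intVecToReal_injective : Function.Injective (intVecToReal ι) :=
  fun _ _ h => funext fun k => Int.cast_injective (congrFun h k)

section Parallelotope

variable [Fintype ι]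
variable {v : ι → ι → ℤ} (hv : LinearIndependent ℝ fun i => intVecToReal ι (v i))

noncomputable def latticeBasis : Basis ι ℝ (ι → ℝ) :=
  basisOfLinearIndependentOfCardEqFinrank' _ hv (by simp)

@[simp]
theorem latticeBasis_apply (i : ι) : latticeBasis hv i = intVecToReal ι (v i) :=
  congrFun (coe_basisOfLinearIndependentOfCardEqFinrank' _ hv _) i

theorem span_latticeBasis :
    Submodule.span ℤ (range (latticeBasis hv)) =
      (Submodule.span ℤ (range v)).map (intVecToReal ι).toIntLinearMap := by
  rw [Submodule.map_span, ← range_comp]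
  congr 2
  ext i : 1
  simp

theorem intVecToReal_mem_span_latticeBasis_iff (x : ι → ℤ) :
    intVecToReal ι x ∈ Submodule.span ℤ (range (latticeBasis hv)) ↔
      x ∈ Submodule.span ℤ (range v) := by
  rw [span_latticeBasis, Submodule.mem_map]
  constructor
  · rintro ⟨y, hy, hyx⟩
    rwa [← intVecToReal_injective hyx]
  · exact fun hx => ⟨x, hx, rfl⟩

noncomputable def parallelotopeEquivQuotient :
    {x : ι → ℤ // intVecToReal ι x ∈ ZSpan.fundamentalDomain (latticeBasis hv)} ≃
      (ι → ℤ) ⧸ (Submodule.span ℤ (range v)).toAddSubgroup := by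
  refine Equiv.ofBijective (fun x => x.1) ⟨?_, ?_⟩
  · rintro ⟨x, hx⟩ ⟨y, hy⟩ hxy
    have hdiff := (intVecToReal_mem_span_latticeBasis_iff hv _).2 (QuotientAddGroup.eq.1 hxy)
    rw [map_add, map_neg, ← ZSpan.fract_eq_fract, ZSpan.fract_eq_self.2 hx,
      ZSpan.fract_eq_self.2 hy] at hdiff
    exact Subtype.ext (intVecToReal_injective hdiff)
  · intro q
    obtain ⟨y, rfl⟩ := QuotientAddGroup.mk_surjective q
    obtain ⟨s, hs, hsfloor⟩ : (ZSpan.floor (latticeBasis hv) (intVecToReal ι y) : ι → ℝ) ∈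
        (Submodule.span ℤ (range v)).map (intVecToReal ι).toIntLinearMap :=
      span_latticeBasis hv ▸ (ZSpan.floor _ _).2
    refine ⟨⟨y - s, ?_⟩, QuotientAddGroup.eq.2 (by simpa using hs)⟩
    rw [map_sub]
    exact hsfloor ▸ ZSpan.fract_mem_fundamentalDomain _ _

end Parallelotope

section Height

variable {L : (ι → ℝ) →ₗ[ℝ] ℝ} {v : ι → ι → ℤ} {i₀ : ι} {m : ℕ}
  (hL0 : ∀ i, i ≠ i₀ → L (intVecToReal ι (v i)) = 0) (hm : (m : ℝ) = L (intVecToReal ι (v i₀)))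
  (hLint : ∀ x, ∃ n : ℤ, L (intVecToReal ι x) = n)

include hL0 hm hLint in
theorem exists_surjective_zmod_hom_of_height (hLsurj : ∀ n : ℤ, ∃ x, L (intVecToReal ι x) = n) :
    ∃ φ : (ι → ℤ) ⧸ (Submodule.span ℤ (range v)).toAddSubgroup →+ ZMod m,
      Function.Surjective φ ∧ ∀ x (n : ℤ), L (intVecToReal ι x) = n → φ x = n := by
  obtain ⟨h, hh⟩ := ((L : (ι → ℝ) →+ ℝ).comp (intVecToReal ι)).exists_intCast_comp_eq hLint
  have hLh : ∀ x (n : ℤ), L (intVecToReal ι x) = n → h x = n :=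
    fun x n hx => Int.cast_injective ((hh x).trans hx)
  let ψ := (Int.castAddHom (ZMod m)).comp h
  have hS : (Submodule.span ℤ (range v)).toAddSubgroup ≤ ψ.ker := by
    rw [Submodule.span_int_eq_addSubgroupClosure, AddSubgroup.closure_le]
    rintro _ ⟨i, rfl⟩
    by_cases hi : i = i₀
    · subst hi
      simp [ψ, hLh _ m hm.symm]
    · simp [ψ, hLh _ 0 (by simpa using hL0 i hi)]
  refine ⟨QuotientAddGroup.lift _ ψ hS, fun k => ?_, fun x n hx => by simp [ψ, hLh x n hx]⟩
  obtain ⟨n, rfl⟩ := ZMod.intCast_surjective k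
  obtain ⟨x, hx⟩ := hLsurj n
  exact ⟨x, by simp [ψ, hLh x n hx]⟩

include hL0 hm hLint in
theorem height_eq_natCast_iff_of_mem_fundamentalDomain [Fintype ι]
    (hv : LinearIndependent ℝ fun i => intVecToReal ι (v i)) {j : ℕ} (hj : j < m)
    {φ : (ι → ℤ) ⧸ (Submodule.span ℤ (range v)).toAddSubgroup →+ ZMod m}
    (hφ : ∀ x (n : ℤ), L (intVecToReal ι x) = n → φ x = n) {x : ι → ℤ}
    (hx : intVecToReal ι x ∈ ZSpan.fundamentalDomain (latticeBasis hv)) :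
    L (intVecToReal ι x) = j ↔ φ x = j := by
  obtain ⟨n, hn⟩ := hLint x
  have hpos : 0 < L (latticeBasis hv i₀) := by
    rw [latticeBasis_apply, ← hm]
    exact_mod_cast Nat.zero_lt_of_lt hj
  have hnm := ZSpan.apply_mem_Ico_of_mem_fundamentalDomain
    (fun i hi => (latticeBasis_apply hv i).symm ▸ hL0 i hi) hpos hx
  rw [latticeBasis_apply, ← hm, hn] at hnm
  rw [hφ x n hn, hn,
    ZMod.intCast_eq_natCast_iff_of_lt (by exact_mod_cast hnm.1) (by exact_mod_cast hnm.2) hj]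
  norm_cast

end Height

theorem stmt_2_general (d : ℕ) (v : Fin d → (Fin d → ℤ))
    (hv : LinearIndependent ℝ (fun i => fun j => ((v i j : ℝ))))
    (i0 : Fin d) (L : (Fin d → ℝ) →ₗ[ℝ] ℝ)
    -- `L` is the facet-height function of the facet `F` spanned by the `v i`, `i ≠ i0`:
    (hL0 : ∀ i, i ≠ i0 → L (fun j => ((v i j : ℝ))) = 0)
    (hLint : ∀ x : Fin d → ℤ, ∃ n : ℤ, L (fun j => ((x j : ℝ))) = n)
    (hLsurj : ∀ n : ℤ, ∃ x : Fin d → ℤ, L (fun j => ((x j : ℝ))) = n)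
    (m : ℕ) (hm : (m : ℝ) = L (fun j => ((v i0 j : ℝ))))
    -- `μF` is the multiplicity of the facet `F`, so that `μ(C) = m * μF`:
    (μF : ℕ)
    (hμ : (Submodule.span ℤ (Set.range v)).toAddSubgroup.index = m * μF) :
    ∀ j : ℕ, j < m →
      Nat.card {x : Fin d → ℤ //
        (∃ a : Fin d → ℝ, (∀ i, 0 ≤ a i ∧ a i < 1) ∧
          (fun k => ((x k : ℝ))) = ∑ i, a i • (fun k => ((v i k : ℝ)))) ∧
        L (fun k => ((x k : ℝ))) = (j : ℝ)} = μF := by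
  intro j hj
  replace hv : LinearIndependent ℝ fun i => intVecToReal _ (v i) := hv
  obtain ⟨φ, hφ, hφL⟩ := exists_surjective_zmod_hom_of_height hL0 hm hLint hLsurj
  have hcard := φ.card_preimage_singleton_mul_card hφ j
  rw [Nat.card_zmod, ← AddSubgroup.index, hμ, mul_comm] at hcard
  rw [← Nat.eq_of_mul_eq_mul_left (by omega) hcard]
  refine Nat.card_congr ((Equiv.subtypeEquivRight fun x => ?_).trans
    ((Equiv.subtypeSubtypeEquivSubtypeInter _ fun x => L (intVecToReal _ x) = j).symm.trans
      ((parallelotopeEquivQuotient hv).subtypeEquiv fun x =>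
        height_eq_natCast_iff_of_mem_fundamentalDomain hL0 hm hLint hv hj hφL x.2)))
  rw [ZSpan.mem_fundamentalDomain_iff_exists_sum]
  simp only [latticeBasis_apply, intVecToReal_apply]

/-- Stratification of the lattice points of the basic parallelotope of a simplicial cone
by heights over a facet: for each `j = 0, …, m-1` there are exactly `μ(F)` lattice points
of height `j`, where `μ(C) = m · μ(F)`. -/
theorem stmt_2 (d : ℕ) (v : Fin d → (Fin d → ℤ))
    (hv : LinearIndependent ℝ (fun i => fun j => ((v i j : ℝ))))
    (i0 : Fin d) (L : (Fin d → ℝ) →ₗ[ℝ] ℝ)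
    -- `L` is the facet-height function of the facet `F` spanned by the `v i`, `i ≠ i0`:
    (hL0 : ∀ i, i ≠ i0 → L (fun j => ((v i j : ℝ))) = 0)
    (hLint : ∀ x : Fin d → ℤ, ∃ n : ℤ, L (fun j => ((x j : ℝ))) = n)
    (hLsurj : ∀ n : ℤ, ∃ x : Fin d → ℤ, L (fun j => ((x j : ℝ))) = n)
    (hLpos : 0 < L (fun j => ((v i0 j : ℝ))))
    (m : ℕ) (hm : (m : ℝ) = L (fun j => ((v i0 j : ℝ))))
    -- `μF` is the multiplicity of the facet `F`, so that `μ(C) = m * μF`: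
    (μF : ℕ)
    (hμ : (Submodule.span ℤ (Set.range v)).toAddSubgroup.index = m * μF) :
    ∀ j : ℕ, j < m →
      Nat.card {x : Fin d → ℤ //
        (∃ a : Fin d → ℝ, (∀ i, 0 ≤ a i ∧ a i < 1) ∧
          (fun k => ((x k : ℝ))) = ∑ i, a i • (fun k => ((v i k : ℝ)))) ∧
        L (fun k => ((x k : ℝ))) = (j : ℝ)} = μF :=
  stmt_2_general d v hv i0 L hL0 hLint hLsurj m hm μF hμ
end

section
/- Let $P \subset \mathbb{R}^d$ be a normal lattice $d$-polytope and let $z \in \mathbb{Z}^d \setminus P$ be a lattice point of height $1$ over $P$, i.e., $\operatorname{ht}_F(z) = -1$ for every facet $F$ of $P$ visible from $z$ (equivalently, $\max_F(-\operatorname{ht}_F(z)) = 1$ over visible facets). Then $Q = \operatorname{conv}(P, z)$ is normal and $Q \cap \mathbb{Z}^d = (P \cap \mathbb{Z}^d) \cup \{z\}$; that is, $(P,Q)$ is a quantum jump. -/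
open Set Pointwise

/-- A point of `ℝ^ι` is a lattice point if all its coordinates are integers. -/
def IsLatticePt {ι : Type} (x : ι → ℝ) : Prop := ∀ i, ∃ n : ℤ, x i = n

/-- A lattice polytope: the convex hull of a nonempty finite set of lattice points. -/
def IsLatticePolytope {ι : Type} (P : Set (ι → ℝ)) : Prop :=
  ∃ V : Set (ι → ℝ), V.Finite ∧ V.Nonempty ∧ (∀ x ∈ V, IsLatticePt x) ∧ P = convexHull ℝ V

/-- A polytope is normal if for every `c ≥ 1` each lattice point of the dilation `c • P`
is a sum of `c` lattice points of `P`. -/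
def IsNormal {ι : Type} (P : Set (ι → ℝ)) : Prop :=
  ∀ c : ℕ, 0 < c → ∀ x : ι → ℝ, x ∈ (c : ℝ) • P → IsLatticePt x →
    ∃ f : Fin c → (ι → ℝ), (∀ i, f i ∈ P ∧ IsLatticePt (f i)) ∧ x = ∑ i, f i

/-- A height-1 lattice point over a normal full-dimensional lattice polytope is a
quantum jump: `conv(P, z)` has exactly the lattice points of `P` plus `z`, and is normal.
The facets of `P` are encoded by its irreducible half-space representation `h`. -/
theorem stmt_7 (d n : ℕ) (P : Set (Fin d → ℝ))
    (hP : IsLatticePolytope P) (hPn : IsNormal P)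
    (hdim : Module.finrank ℝ (affineSpan ℝ P).direction = d)
    (h : Fin n → ((Fin d → ℝ) →ᵃ[ℝ] ℝ))
    (hrep : P = {x | ∀ i, 0 ≤ h i x})
    (hint : ∀ i, ∀ x : Fin d → ℝ, IsLatticePt x → ∃ m : ℤ, h i x = m)
    (hsurj : ∀ i, ∀ m : ℤ, ∃ x : Fin d → ℝ, IsLatticePt x ∧ h i x = m)
    (hfacet : ∀ i,
      Module.finrank ℝ (affineSpan ℝ {x ∈ P | h i x = 0}).direction = d - 1)
    (z : Fin d → ℝ) (hz : IsLatticePt z) (hzP : z ∉ P)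
    -- z has height 1 over P: every facet-height of z is ≥ -1
    (hht : ∀ i, -1 ≤ h i z) :
    {x ∈ convexHull ℝ (insert z P) | IsLatticePt x} = {x ∈ P | IsLatticePt x} ∪ {z} ∧
    IsNormal (convexHull ℝ (insert z P)) := by
  classical
  set Q := convexHull ℝ (insert z P) with hQdef
  -- basic facts
  have hPne : P.Nonempty := by
    obtain ⟨V, hVf, hVne, hVlat, hPV⟩ := hP
    exact hVne.mono (hPV ▸ subset_convexHull ℝ V)
  have hmemP : ∀ x, x ∈ P ↔ ∀ i, 0 ≤ h i x := by
    intro x; rw [hrep]; rfl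
  have hcomb : ∀ (i) (a b : ℝ) (p q : Fin d → ℝ), a + b = 1 →
      h i (a • p + b • q) = a * h i p + b * h i q := by
    intro i a b p q hab
    have := Convex.combo_affine_apply (f := h i) (x := p) (y := q) hab
    simpa [smul_eq_mul] using this
  have hPconv : Convex ℝ P := by
    intro x hx y hy a b ha hb hab
    rw [hmemP] at *
    intro i
    rw [hcomb i a b x y hab]
    have := hx i; have := hy i
    positivity
  have hPQ : P ⊆ Q := (Set.subset_insert z P).trans (subset_convexHull ℝ _)
  have hzQ : z ∈ Q := subset_convexHull ℝ _ (mem_insert z P)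
  have hQconv : Convex ℝ Q := convex_convexHull ℝ _
  have hQrep : ∀ q ∈ Q, ∃ p ∈ P, ∃ t : ℝ, 0 ≤ t ∧ t ≤ 1 ∧ q = (1 - t) • p + t • z := by
    intro q hq
    rw [hQdef, convexHull_insert hPne, mem_convexJoin] at hq
    obtain ⟨a, ha, b, hb, hseg⟩ := hq
    rw [mem_singleton_iff] at ha
    rw [hPconv.convexHull_eq] at hb
    obtain ⟨s, t, hs, ht, hst, hq⟩ := hseg
    subst ha
    exact ⟨b, hb, s, hs, by linarith, by rw [← hq]; rw [show (1:ℝ) - s = t by linarith]; abel⟩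
  have h0lat : IsLatticePt (0 : Fin d → ℝ) := fun i => ⟨0, by simp⟩
  have hlin : ∀ (i) (m : ℝ) (q : Fin d → ℝ), h i (m • q) = m * h i q - (m - 1) * h i 0 := by
    intro i m q
    have hd := AffineMap.decomp (h i)
    have e1 := congrFun hd (m • q)
    have e2 := congrFun hd q
    simp only [Pi.add_apply] at e1 e2
    rw [(h i).linear.map_smul, smul_eq_mul] at e1
    -- e1 : h i (m • q) = m * (h i).linear q + h i 0
    -- e2 : h i q = (h i).linear q + h i 0
    have : ((h i).linear) q = h i q - h i 0 := by linarith
    rw [e1, this]; ring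
  -- the only new lattice point of Q is z
  have hQlat : ∀ x, x ∈ Q → IsLatticePt x → x ∉ P → x = z := by
    intro x hxQ hxlat hxP
    obtain ⟨p, hp, t, ht0, ht1, hxe⟩ := hQrep x hxQ
    rw [hmemP] at hxP
    push_neg at hxP
    obtain ⟨i, hi⟩ := hxP
    replace hi : ¬ 0 ≤ h i x := not_le.mpr hi
    obtain ⟨m, hm⟩ := hint i x hxlat
    have hhx : h i x = (1 - t) * h i p + t * h i z := by
      rw [hxe]; exact hcomb i _ _ _ _ (by ring)
    have hhp : 0 ≤ h i p := (hmemP p).1 hp i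
    have hm1 : h i x ≤ -1 := by
      have : (m : ℝ) < 0 := by rw [← hm]; exact lt_of_not_ge hi
      have : m < 0 := by exact_mod_cast this
      have : m ≤ -1 := by omega
      rw [hm]; exact_mod_cast this
    have hz1 := hht i
    have ht : t = 1 := by nlinarith
    rw [hxe, ht]; simp
  -- key normality induction
  have key : ∀ c : ℕ, ∀ x : Fin d → ℝ, x ∈ ((c + 1 : ℕ) : ℝ) • Q → IsLatticePt x →
      ∃ f : Fin (c + 1) → (Fin d → ℝ), (∀ i, f i ∈ Q ∧ IsLatticePt (f i)) ∧ x = ∑ i, f i := by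
    intro c
    induction c with
    | zero =>
      intro x hx hxl
      have hxQ : x ∈ Q := by
        obtain ⟨q, hq, hqe⟩ := hx
        norm_num at hqe
        rwa [← hqe]
      exact ⟨fun _ => x, fun i => ⟨hxQ, hxl⟩, by simp⟩
    | succ c ih =>
      intro x hx hxl
      obtain ⟨q, hq, hqe⟩ := Set.mem_smul_set.mp hx
      set C : ℝ := ((c + 1 + 1 : ℕ) : ℝ) with hCdef
      have hC : C = (c : ℝ) + 2 := by push_cast [hCdef]; ring
      by_cases hqP : q ∈ P
      · have hxP : x ∈ (((c + 1 + 1 : ℕ) : ℝ)) • P := ⟨q, hqP, hqe⟩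
        obtain ⟨f, hf, hfs⟩ := hPn (c + 1 + 1) (by omega) x hxP hxl
        exact ⟨f, fun i => ⟨hPQ (hf i).1, (hf i).2⟩, hfs⟩
      · obtain ⟨p, hp, t, ht0, ht1, hqrep⟩ := hQrep q hq
        rw [hmemP] at hqP
        push_neg at hqP
        obtain ⟨i, hiq⟩ := hqP
        obtain ⟨m, hm⟩ := hint i x hxl
        obtain ⟨m0, hm0⟩ := hint i 0 h0lat
        have hCq : C * h i q = (m : ℝ) + (C - 1) * m0 := by
          have e := hlin i C q
          rw [hqe] at e
          rw [hm, hm0] at e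
          linarith
        have hCneg : C * h i q ≤ -1 := by
          have hCpos : (0 : ℝ) < C := by rw [hC]; positivity
          have hlt : ((m + (c + 1) * m0 : ℤ) : ℝ) < 0 := by
            push_cast
            rw [show ((m:ℝ) + ((c:ℝ)+1) * m0) = C * h i q by rw [hCq, hC]; ring]
            exact mul_neg_of_pos_of_neg hCpos hiq
          have : (m + (c + 1) * m0 : ℤ) < 0 := by exact_mod_cast hlt
          have : (m + (c + 1) * m0 : ℤ) ≤ -1 := by omega
          have : ((m + (c + 1) * m0 : ℤ) : ℝ) ≤ -1 := by exact_mod_cast this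
          calc C * h i q = ((m + (c + 1) * m0 : ℤ) : ℝ) := by push_cast; rw [hCq, hC]; ring
            _ ≤ -1 := this
        have hhq : h i q = (1 - t) * h i p + t * h i z := by
          rw [hqrep]; exact hcomb i _ _ _ _ (by ring)
        have hhp : 0 ≤ h i p := (hmemP p).1 hp i
        have hz1 := hht i
        have hCt : 1 ≤ C * t := by nlinarith [hC, Nat.cast_nonneg (α := ℝ) c]
        have hcn : (0:ℝ) ≤ (c:ℝ) := Nat.cast_nonneg c
        have hC1 : (0 : ℝ) < C - 1 := by rw [hC]; linarith
        set a : ℝ := C * (1 - t) / (C - 1) with hadef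
        set b : ℝ := (C * t - 1) / (C - 1) with hbdef
        have hCt1 : C * (1 - t) ≥ 0 := by
          have : (0:ℝ) < C := by linarith
          nlinarith
        have hq' : a • p + b • z ∈ Q :=
          hQconv (hPQ hp) hzQ (div_nonneg hCt1 hC1.le)
            (div_nonneg (by linarith) hC1.le)
            (by rw [hadef, hbdef]; field_simp; ring)
        have hxz : x - z = (C - 1) • (a • p + b • z) := by
          funext j
          have hqj := congrFun hqe j
          have hqrj := congrFun hqrep j
          simp only [Pi.smul_apply, Pi.add_apply, Pi.sub_apply, smul_eq_mul] at hqj hqrj ⊢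
          rw [hadef, hbdef]
          have hxj : x j = C * ((1 - t) * p j + t * z j) := by
            rw [← hqj, hqrj]
          rw [hxj]
          field_simp
          ring
        have hxzQ : x - z ∈ ((c + 1 : ℕ) : ℝ) • Q := by
          refine ⟨a • p + b • z, hq', ?_⟩
          have hC1' : ((c + 1 : ℕ) : ℝ) = C - 1 := by rw [hC]; push_cast; ring
          rw [hC1', hxz]
        have hxzl : IsLatticePt (x - z) := by
          intro j
          obtain ⟨a1, e1⟩ := hxl j
          obtain ⟨a2, e2⟩ := hz j
          exact ⟨a1 - a2, by push_cast [Pi.sub_apply, e1, e2]; ring⟩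
        obtain ⟨f', hf', hfs'⟩ := ih (x - z) hxzQ hxzl
        refine ⟨Fin.cons z f', ?_, ?_⟩
        · intro j
          refine Fin.cases ?_ ?_ j
          · exact ⟨hzQ, hz⟩
          · intro j'; simpa using hf' j'
        · rw [Fin.sum_cons, ← hfs']; abel
  constructor
  · ext x
    simp only [mem_setOf_eq, mem_union, mem_singleton_iff]
    constructor
    · rintro ⟨hxQ, hxl⟩
      by_cases hxP : x ∈ P
      · exact Or.inl ⟨hxP, hxl⟩
      · exact Or.inr (hQlat x hxQ hxl hxP)
    · rintro (⟨hxP, hxl⟩ | rfl)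
      · exact ⟨hPQ hxP, hxl⟩
      · exact ⟨hzQ, hz⟩
  · intro c hc x hx hxl
    obtain ⟨c', rfl⟩ : ∃ c', c = c' + 1 := ⟨c - 1, by omega⟩
    exact key c' x hx hxl
end

section
/- Let $P \subset \mathbb{R}^d$ be a lattice polytope with $\dim P \le 2$, and let $(P, Q)$ be a quantum jump, i.e., $Q = \operatorname{conv}(P, z)$ is normal with exactly one more lattice point $z$ than $P$. Then $\operatorname{ht}_P(z) = 1$: the point $z$ has lattice height $1$ over every facet of $P$ visible from it. -/
open Set Pointwise

/-! Let `f = h i` with `f z < 0`, and suppose `f z ≠ -1`. Every lattice point of `conv(P, z)` other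
than `z` lies in `P`, where `f ≥ 0`, so it suffices to find a lattice point of `conv(P, z)` at
height `f = -1`. Let `g` be a lattice vector with `f.linear g = 1`.
In dimension one, `z + (-1 - f z) • g` lies between `z` and any point of `P`.
In dimension two, the facet contains two lattice points `v ≠ w`. Completing `g` to a lattice
basis `(g, e)` with `f.linear e = 0` gives `w = v + N • e` and `z = v - m • g + A • e` with
`m = -f z`, so `v + e` or `v - e` lies in `P`; say `v + e`. The line `f = -1` meets the triangle
`conv(z, v, v + e)` in `v - g + [A / m, (A + m - 1) / m] • e`, and this interval contains an
integer `k`. -/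

namespace IsLatticePt

variable {ι : Type} {x y : ι → ℝ}

theorem add (hx : IsLatticePt x) (hy : IsLatticePt y) : IsLatticePt (x + y) := fun j => by
  obtain ⟨a, ha⟩ := hx j
  obtain ⟨b, hb⟩ := hy j
  exact ⟨a + b, by simp [ha, hb]⟩

theorem sub (hx : IsLatticePt x) (hy : IsLatticePt y) : IsLatticePt (x - y) := fun j => by
  obtain ⟨a, ha⟩ := hx j
  obtain ⟨b, hb⟩ := hy j
  exact ⟨a - b, by simp [ha, hb]⟩

theorem int_smul (k : ℤ) (hx : IsLatticePt x) : IsLatticePt ((k : ℝ) • x) := fun j => by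
  obtain ⟨a, ha⟩ := hx j
  exact ⟨k * a, by simp [ha]⟩

end IsLatticePt

theorem AffineMap.exists_int_linear_eq {ι : Type} (f : (ι → ℝ) →ᵃ[ℝ] ℝ)
    (hf : ∀ x, IsLatticePt x → ∃ m : ℤ, f x = m) (x : ι → ℝ) (hx : IsLatticePt x) :
    ∃ m : ℤ, f.linear x = m := by
  obtain ⟨a, ha⟩ := hf x hx
  obtain ⟨b, hb⟩ := hf 0 fun _ => ⟨0, by simp⟩
  exact ⟨a - b, by simpa [ha, hb] using f.linearMap_vsub x 0⟩

theorem AffineMap.exists_isLatticePt_linear_eq_one {ι : Type} (f : (ι → ℝ) →ᵃ[ℝ] ℝ)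
    (hf : ∀ m : ℤ, ∃ x, IsLatticePt x ∧ f x = m) :
    ∃ g, IsLatticePt g ∧ f.linear g = 1 := by
  obtain ⟨x₀, hx₀, h₀⟩ := hf 0
  obtain ⟨x₁, hx₁, h₁⟩ := hf 1
  exact ⟨x₁ - x₀, hx₁.sub hx₀, by simpa [h₀, h₁] using f.linearMap_vsub x₁ x₀⟩

theorem mem_convexHull_setOf_eq_zero {E : Type*} [AddCommGroup E] [Module ℝ E] {V : Set E}
    (f : E →ᵃ[ℝ] ℝ) (hf : ∀ v ∈ V, 0 ≤ f v) {x : E} (hx : x ∈ convexHull ℝ V) (hfx : f x = 0) :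
    x ∈ convexHull ℝ {v ∈ V | f v = 0} := by
  set C := {y | 0 ≤ f y ∧ (f y = 0 → y ∈ convexHull ℝ {v ∈ V | f v = 0})}
  have hVC : V ⊆ C := fun v hv => ⟨hf v hv, fun h0 => subset_convexHull ℝ _ ⟨hv, h0⟩⟩
  suffices hC : Convex ℝ C from (convexHull_min hVC hC hx).2 hfx
  intro y ⟨hy, hy0⟩ y' ⟨hy', hy0'⟩ a b ha hb hab
  simp only [C, Set.mem_ofPred_eq, Convex.combo_affine_apply hab, smul_eq_mul]
  refine ⟨by positivity, fun h0 => ?_⟩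
  rcases ha.eq_or_lt with rfl | ha
  · simp_all
  rcases hb.eq_or_lt with rfl | hb
  · simp_all
  have hfy : f y = 0 := by nlinarith
  have hfy' : f y' = 0 := by nlinarith
  exact convex_convexHull ℝ _ (hy0 hfy) (hy0' hfy') ha.le hb.le hab

theorem Set.Subsingleton.convexHull_setOf_eq_zero {E : Type*} [AddCommGroup E] [Module ℝ E]
    {V : Set E} {f : E →ᵃ[ℝ] ℝ} (hf : ∀ v ∈ V, 0 ≤ f v) (hV : {v ∈ V | f v = 0}.Subsingleton) :
    {x ∈ convexHull ℝ V | f x = 0}.Subsingleton := by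
  have hsub : {x ∈ convexHull ℝ V | f x = 0} ⊆ convexHull ℝ {v ∈ V | f v = 0} :=
    fun x ⟨hx, hx0⟩ => mem_convexHull_setOf_eq_zero f hf hx hx0
  rcases hV.eq_empty_or_singleton with he | ⟨a, ha⟩
  · rw [he, convexHull_empty] at hsub
    exact subsingleton_empty.anti hsub
  · rw [ha, convexHull_singleton] at hsub
    exact subsingleton_singleton.anti hsub

theorem LinearMap.eq_apply_smul_fin_one (L : (Fin 1 → ℝ) →ₗ[ℝ] ℝ) {g : Fin 1 → ℝ} (hg : L g = 1)
    (x : Fin 1 → ℝ) : x = L x • g := by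
  have hL : ∀ y : Fin 1 → ℝ, L y = y 0 * L 1 := fun y => by
    conv_lhs => rw [show y = y 0 • 1 from funext fun j => by simp [Fin.fin_one_eq_zero j]]
    rw [map_smul, smul_eq_mul]
  funext j
  rw [Fin.fin_one_eq_zero j, Pi.smul_apply, smul_eq_mul, hL]
  rw [hL] at hg
  linear_combination (-x 0) * hg


theorem exists_isLatticePt_eq_neg_one_fin_one (f : (Fin 1 → ℝ) →ᵃ[ℝ] ℝ)
    (hf : ∀ x, IsLatticePt x → ∃ m : ℤ, f x = m) {g : Fin 1 → ℝ} (hg : IsLatticePt g)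
    (hfg : f.linear g = 1) {S : Set (Fin 1 → ℝ)} (hS : Convex ℝ S) {z p : Fin 1 → ℝ}
    (hz : IsLatticePt z) (hzS : z ∈ S) (hpS : p ∈ S) (hfz : f z ≤ -1) (hfp : 0 ≤ f p) :
    ∃ q ∈ S, IsLatticePt q ∧ f q = -1 := by
  have hdiff : ∀ x y, f.linear (x - y) = f x - f y := f.linearMap_vsub
  obtain ⟨nz, hnz⟩ := hf z hz
  have hpos : 0 < f p - f z := by linarith
  refine ⟨z + ((-1 - nz : ℤ) : ℝ) • g, ?_, hz.add (hg.int_smul _), ?_⟩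
  · have hq : z + ((-1 - nz : ℤ) : ℝ) • g = z + ((-1 - f z) / (f p - f z)) • (p - z) := by
      rw [f.linear.eq_apply_smul_fin_one hfg (p - z), hdiff, smul_smul, div_mul_cancel₀ _ hpos.ne',
        hnz]
      push_cast
      rfl
    rw [hq]
    exact hS.add_smul_sub_mem hzS hpS ⟨div_nonneg (by linarith) hpos.le,
      (div_le_one hpos).2 (by linarith)⟩
  · have := hdiff (z + ((-1 - nz : ℤ) : ℝ) • g) z
    rw [add_sub_cancel_left, map_smul, hfg, hnz, smul_eq_mul, mul_one] at this
    push_cast at this ⊢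
    linarith

theorem LinearMap.exists_isLatticePt_basis_fin_two (L : (Fin 2 → ℝ) →ₗ[ℝ] ℝ)
    (hL : ∀ x, IsLatticePt x → ∃ m : ℤ, L x = m) {g : Fin 2 → ℝ} (hg : IsLatticePt g)
    (hLg : L g = 1) :
    ∃ e, IsLatticePt e ∧ L e = 0 ∧ ∀ c, IsLatticePt c → ∃ a : ℤ, c = L c • g + (a : ℝ) • e := by
  have hsingle : ∀ j : Fin 2, IsLatticePt (Pi.single j (1 : ℝ)) := fun j i => by
    by_cases hij : i = j
    exacts [⟨1, by simp [hij]⟩, ⟨0, by simp [hij]⟩]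
  obtain ⟨α, hα⟩ := hL _ (hsingle 0)
  obtain ⟨β, hβ⟩ := hL _ (hsingle 1)
  have hL2 : ∀ y : Fin 2 → ℝ, L y = y 0 * α + y 1 * β := by
    intro y
    conv_lhs => rw [show y = y 0 • Pi.single 0 1 + y 1 • Pi.single 1 1 by
      ext j; fin_cases j <;> simp]
    simp [hα, hβ]
  obtain ⟨g₀, hg₀⟩ := hg 0
  obtain ⟨g₁, hg₁⟩ := hg 1
  rw [hL2, hg₀, hg₁] at hLg
  -- `e = (-β, α)` has `det (g, e) = L g = 1`, so `c = L c • g + det (g, c) • e` for every `c`.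
  refine ⟨![-β, α], fun j => ?_, by simp [hL2]; ring, fun c hc => ?_⟩
  · fin_cases j
    exacts [⟨-β, by simp⟩, ⟨α, by simp⟩]
  · obtain ⟨c₀, hc₀⟩ := hc 0
    obtain ⟨c₁, hc₁⟩ := hc 1
    refine ⟨g₀ * c₁ - g₁ * c₀, funext fun j => ?_⟩
    fin_cases j <;> simp [hL2, hg₀, hg₁, hc₀, hc₁]
    · linear_combination (-(c₀ : ℝ)) * hLg
    · linear_combination (-(c₁ : ℝ)) * hLg

theorem Convex.exists_int_sub_add_smul_mem {E : Type*} [AddCommGroup E] [Module ℝ E]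
    {S : Set E} (hS : Convex ℝ S) {v e g : E} {N m A : ℤ} (hN : N ≠ 0) (hm : 0 < m)
    (hv : v ∈ S) (hw : v + (N : ℝ) • e ∈ S) (hz : v - (m : ℝ) • g + (A : ℝ) • e ∈ S) :
    ∃ k : ℤ, v - g + (k : ℝ) • e ∈ S := by
  wlog hNpos : 0 < N generalizing e N A
  · obtain ⟨k, hk⟩ := this (e := -e) (N := -N) (A := -A) (by omega) (by simpa using hw)
      (by simpa using hz) (by omega)
    exact ⟨-k, by simpa using hk⟩
  have he : v + e ∈ S := by
    have hNR : (0 : ℝ) < N := by exact_mod_cast hNpos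
    simpa [smul_smul, inv_mul_cancel₀ hNR.ne'] using
      hS.add_smul_mem hv hw ⟨inv_nonneg.2 hNR.le, inv_le_one_of_one_le₀ (by exact_mod_cast hNpos)⟩
  obtain ⟨k, r, hr0, hrm, hk⟩ : ∃ k r : ℤ, 0 ≤ r ∧ r < m ∧ k * m = A + r :=
    ⟨-((-A) / m), (-A) % m, Int.emod_nonneg _ hm.ne', Int.emod_lt_of_pos _ hm,
      by rw [Int.emod_def]; ring⟩
  refine ⟨k, ?_⟩
  have hmR : (0 : ℝ) < m := by exact_mod_cast hm
  have hrR : (0 : ℝ) ≤ r := by exact_mod_cast hr0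
  have hrmR : (r : ℝ) + 1 ≤ m := by exact_mod_cast hrm
  have hkR : (k : ℝ) * m = A + r := by exact_mod_cast hk
  have hmem := hS.sum_mem (t := Finset.univ)
    (w := (![1 / (m : ℝ), r / m, (m - 1 - r) / m] : Fin 3 → ℝ))
    (z := ![v - (m : ℝ) • g + (A : ℝ) • e, v + e, v])
    (fun i _ => by
      fin_cases i
      exacts [by simp [hmR.le], by simp; positivity, by simpa using div_nonneg (by linarith) hmR.le])
    (by simp [Fin.sum_univ_three]; field_simp; ring)
    (fun i _ => by fin_cases i <;> simp [hz, he, hv])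
  convert hmem using 1
  simp only [Fin.sum_univ_three, Matrix.cons_val_zero, Matrix.cons_val_one, Matrix.cons_val_two,
    Matrix.head_cons, Matrix.tail_cons]
  match_scalars <;> field_simp
  · ring
  · exact hkR

theorem exists_isLatticePt_eq_neg_one_fin_two (f : (Fin 2 → ℝ) →ᵃ[ℝ] ℝ)
    (hf : ∀ x, IsLatticePt x → ∃ m : ℤ, f x = m) {g : Fin 2 → ℝ} (hg : IsLatticePt g)
    (hfg : f.linear g = 1) {S : Set (Fin 2 → ℝ)} (hS : Convex ℝ S) {v w z : Fin 2 → ℝ}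
    (hv : IsLatticePt v) (hw : IsLatticePt w) (hz : IsLatticePt z) (hvS : v ∈ S) (hwS : w ∈ S)
    (hzS : z ∈ S) (hvw : v ≠ w) (hfv : f v = 0) (hfw : f w = 0) (hfz : f z ≤ -1) :
    ∃ q ∈ S, IsLatticePt q ∧ f q = -1 := by
  have hdiff : ∀ x y, f.linear (x - y) = f x - f y := f.linearMap_vsub
  obtain ⟨e, he, hLe, hbasis⟩ :=
    f.linear.exists_isLatticePt_basis_fin_two (f.exists_int_linear_eq hf) hg hfg
  obtain ⟨N, hN⟩ := hbasis _ (hw.sub hv)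
  obtain ⟨A, hA⟩ := hbasis _ (hz.sub hv)
  obtain ⟨nz, hnz⟩ := hf z hz
  rw [hdiff, hfw, hfv, sub_zero, zero_smul, zero_add] at hN
  rw [hdiff, hfv, sub_zero, hnz] at hA
  have hN0 : N ≠ 0 := by
    rintro rfl
    exact hvw (by simpa [sub_eq_zero, eq_comm] using hN)
  have hm : 0 < -nz := by
    have : (nz : ℝ) < 0 := by linarith
    exact_mod_cast neg_pos.2 this
  have hw' : v + (N : ℝ) • e = w := by rw [← hN, add_sub_cancel]
  have hz' : v - ((-nz : ℤ) : ℝ) • g + (A : ℝ) • e = z := by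
    rw [Int.cast_neg, neg_smul, sub_neg_eq_add, add_assoc, ← hA, add_sub_cancel]
  obtain ⟨k, hk⟩ := hS.exists_int_sub_add_smul_mem hN0 hm hvS (hw' ▸ hwS) (hz' ▸ hzS)
  refine ⟨v - g + (k : ℝ) • e, hk, (hv.sub hg).add (he.int_smul k), ?_⟩
  have := hdiff (v - g + (k : ℝ) • e) v
  rw [show v - g + (k : ℝ) • e - v = -g + (k : ℝ) • e by abel, map_add, map_neg, map_smul, hfg,
    hLe, hfv, smul_zero] at this
  linarith

theorem exists_isLatticePt_eq_neg_one_of_le_two {d : ℕ} (hd : d ≤ 2) {V : Set (Fin d → ℝ)}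
    (hV : V.Nonempty) (hVlat : ∀ v ∈ V, IsLatticePt v) (f : (Fin d → ℝ) →ᵃ[ℝ] ℝ)
    (hf : ∀ x, IsLatticePt x → ∃ m : ℤ, f x = m) (hfs : ∀ m : ℤ, ∃ x, IsLatticePt x ∧ f x = m)
    (hfV : ∀ v ∈ V, 0 ≤ f v)
    (hfacet : Module.finrank ℝ (affineSpan ℝ {x ∈ convexHull ℝ V | f x = 0}).direction = d - 1)
    {z : Fin d → ℝ} (hz : IsLatticePt z) (hzV : z ∉ convexHull ℝ V) (hfz : f z ≤ -1) :
    ∃ q ∈ convexHull ℝ (insert z (convexHull ℝ V)), IsLatticePt q ∧ f q = -1 := by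
  have hVS : V ⊆ convexHull ℝ (insert z (convexHull ℝ V)) :=
    (subset_convexHull ℝ V).trans ((subset_insert _ _).trans (subset_convexHull ℝ _))
  have hzS := subset_convexHull ℝ _ (mem_insert z (convexHull ℝ V))
  obtain ⟨g, hg, hfg⟩ := f.exists_isLatticePt_linear_eq_one hfs
  obtain ⟨v, hv⟩ := hV
  obtain rfl | rfl | rfl : d = 0 ∨ d = 1 ∨ d = 2 := by omega
  · exact absurd (Subsingleton.elim v z ▸ subset_convexHull ℝ V hv) hzV
  · exact exists_isLatticePt_eq_neg_one_fin_one f hf hg hfg (convex_convexHull ℝ _) hz hzS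
      (hVS hv) hfz (hfV v hv)
  · have hV₀ : ¬ {v ∈ V | f v = 0}.Subsingleton := fun hs => by
      rw [direction_affineSpan, (vectorSpan_eq_bot_iff_subsingleton ℝ).2
        (hs.convexHull_setOf_eq_zero hfV), finrank_bot] at hfacet
      simp at hfacet
    obtain ⟨v, ⟨hvV, hv0⟩, w, ⟨hwV, hw0⟩, hvw⟩ := not_subsingleton_iff.1 hV₀
    exact exists_isLatticePt_eq_neg_one_fin_two f hf hg hfg (convex_convexHull ℝ _)
      (hVlat v hvV) (hVlat w hwV) hz (hVS hvV) (hVS hwV) hzS hvw hv0 hw0 hfz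

theorem stmt_8_general (d n : ℕ) (hd : d ≤ 2) (P : Set (Fin d → ℝ))
    (hP : IsLatticePolytope P)
    (h : Fin n → ((Fin d → ℝ) →ᵃ[ℝ] ℝ))
    (hrep : P = {x | ∀ i, 0 ≤ h i x})
    (hint : ∀ i, ∀ x : Fin d → ℝ, IsLatticePt x → ∃ m : ℤ, h i x = m)
    (hsurj : ∀ i, ∀ m : ℤ, ∃ x : Fin d → ℝ, IsLatticePt x ∧ h i x = m)
    (hfacet : ∀ i,
      Module.finrank ℝ (affineSpan ℝ {x ∈ P | h i x = 0}).direction = d - 1)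
    (z : Fin d → ℝ) (hz : IsLatticePt z) (hzP : z ∉ P)
    -- (P, conv(P,z)) is a quantum jump:
    (hlat : {x ∈ convexHull ℝ (insert z P) | IsLatticePt x} = {x ∈ P | IsLatticePt x} ∪ {z}) :
    ∀ i, h i z < 0 → h i z = -1 := by
  obtain ⟨V, -, hVne, hVlat, rfl⟩ := hP
  intro i hzi
  by_contra hne
  have hnonneg : ∀ x ∈ convexHull ℝ V, 0 ≤ h i x := fun x hx => by
    rw [hrep] at hx
    exact hx i
  have hzi' : h i z ≤ -1 := by
    obtain ⟨m, hm⟩ := hint i z hz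
    rw [hm] at hzi ⊢
    have : m < 0 := by exact_mod_cast hzi
    exact_mod_cast Int.le_sub_one_of_lt this
  obtain ⟨q, hqS, hq, hiq⟩ := exists_isLatticePt_eq_neg_one_of_le_two hd hVne hVlat (h i) (hint i)
    (hsurj i) (fun v hv => hnonneg v (subset_convexHull ℝ V hv)) (hfacet i) hz hzP hzi'
  rcases (hlat ▸ ⟨hqS, hq⟩ : q ∈ {x ∈ convexHull ℝ V | IsLatticePt x} ∪ {z}) with ⟨hqP, -⟩ | rfl
  · linarith [hnonneg q hqP]
  · exact hne hiq

/-- In dimension at most `2`, every quantum jump has height `1`: the extra lattice point `z`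
has height `1` over every facet of `P` visible from it. -/
theorem stmt_8 (d n : ℕ) (hd : d ≤ 2) (P : Set (Fin d → ℝ))
    (hP : IsLatticePolytope P) (hPn : IsNormal P)
    (hdim : Module.finrank ℝ (affineSpan ℝ P).direction = d)
    (h : Fin n → ((Fin d → ℝ) →ᵃ[ℝ] ℝ))
    (hrep : P = {x | ∀ i, 0 ≤ h i x})
    (hint : ∀ i, ∀ x : Fin d → ℝ, IsLatticePt x → ∃ m : ℤ, h i x = m)
    (hsurj : ∀ i, ∀ m : ℤ, ∃ x : Fin d → ℝ, IsLatticePt x ∧ h i x = m)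
    (hfacet : ∀ i,
      Module.finrank ℝ (affineSpan ℝ {x ∈ P | h i x = 0}).direction = d - 1)
    (z : Fin d → ℝ) (hz : IsLatticePt z) (hzP : z ∉ P)
    -- (P, conv(P,z)) is a quantum jump:
    (hlat : {x ∈ convexHull ℝ (insert z P) | IsLatticePt x} = {x ∈ P | IsLatticePt x} ∪ {z})
    (hQn : IsNormal (convexHull ℝ (insert z P))) :
    ∀ i, h i z < 0 → h i z = -1 :=
  stmt_8_general d n hd P hP h hrep hint hsurj hfacet z hz hzP hlat
end

section
/- Let $P \subset \mathbb{R}^d$ be a normal lattice $d$-polytope with $0 \notin P$ and set $Q = \operatorname{conv}(P \cup \{0\})$. Assume $Q \cap \mathbb{Z}^d = (P \cap \mathbb{Z}^d) \cup \{0\}$. Then the following are equivalent: (a) $Q$ is normal; (b) for all $k \in \mathbb{N}$, $(kQ \setminus ((k-1)Q \cup kP)) \cap \mathbb{Z}^d = \emptyset$; (c) condition (b) holds for $k = 1, \dots, d-1$. -/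
/-!
(a) ⇒ (b): a lattice point of `kQ` is a sum of `k` lattice points of `Q`; either one of them is
`0`, and the point lies in `(k - 1)Q`, or all of them lie in `P`. (b) ⇒ (a) follows by induction
on `k` from the normality of `P`.

(c) ⇒ (b) is the degree bound for the Hilbert basis of the cone over `Q`. By Carathéodory a
lattice point `x ∈ kQ` is `∑ bᵢ zᵢ` with `zᵢ` affinely independent lattice points of `Q` and
`∑ bᵢ = k`. If some `bᵢ ≥ 1`, then `x - zᵢ` is a lattice point of `(k - 1)Q` and induction on `k`
applies. Otherwise `k < #z ≤ d + 1`, so `k = d` and the `zᵢ` span a lattice `d`-simplex; then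
`y = ∑ zᵢ - x` is a lattice point of that simplex, and subdividing the simplex at `y` places `x` in
the `d`-fold dilate of a lattice simplex of strictly smaller normalized volume. As normalized
volumes are positive integers, this ends in the first case.
-/

open Set Pointwise

namespace IsLatticePt

variable {ι : Type} {x y : ι → ℝ}

theorem zero : IsLatticePt (0 : ι → ℝ) := fun _ => ⟨0, by simp⟩

theorem sum {κ : Type*} {s : Finset κ} {f : κ → ι → ℝ} (hf : ∀ i ∈ s, IsLatticePt (f i)) :
    IsLatticePt (∑ i ∈ s, f i) :=
  Finset.sum_induction f IsLatticePt (fun _ _ => add) zero hf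

end IsLatticePt

section Convex

variable {E : Type*} [AddCommGroup E] [Module ℝ E] {S : Set E}

theorem Convex.sum_smul_mem_smul {κ : Type*} (hS : Convex ℝ S) (hne : S.Nonempty)
    {s : Finset κ} {w : κ → ℝ} {z : κ → E} (hw : ∀ i ∈ s, 0 ≤ w i) (hz : ∀ i ∈ s, z i ∈ S) :
    ∑ i ∈ s, w i • z i ∈ (∑ i ∈ s, w i) • S := by
  rcases (Finset.sum_nonneg hw).eq_or_lt with h | h
  · have hw0 := (Finset.sum_eq_zero_iff_of_nonneg hw).1 h.symm
    rw [← h, zero_smul_set hne, Finset.sum_eq_zero fun i hi => by rw [hw0 i hi, zero_smul]]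
    rfl
  · refine ⟨s.centerMass w z, hS.centerMass_mem hw h hz, ?_⟩
    simp [Finset.centerMass, smul_smul, mul_inv_cancel₀ h.ne']

theorem Convex.smul_set_subset_smul_set (hS : Convex ℝ S) (h0 : (0 : E) ∈ S) {s t : ℝ}
    (hs : 0 ≤ s) (hst : s ≤ t) : s • S ⊆ t • S := by
  intro x hx
  have : x + 0 ∈ s • S + (t - s) • S :=
    add_mem_add hx (by simpa using smul_mem_smul_set (a := t - s) h0)
  rwa [add_zero, ← hS.add_smul hs (sub_nonneg.2 hst), add_sub_cancel] at this

theorem Convex.add_mem_add_one_smul (hS : Convex ℝ S) {p x : E} {r : ℝ} (hr : 0 ≤ r)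
    (hp : p ∈ S) (hx : x ∈ r • S) : p + x ∈ (r + 1) • S := by
  rw [add_comm r, hS.add_smul zero_le_one hr, one_smul]
  exact add_mem_add hp hx

end Convex

section Stellar

variable {κ E : Type*} [Fintype κ] [DecidableEq κ] [AddCommGroup E] [Module ℝ E]

-- Subdividing the cone over `t` at `y = ∑ μ i • t i`: `∑ a i • t i` lies in the cell where `y`
-- replaces `t j`, for `j` minimising `a i / μ i`.
theorem exists_sum_smul_update_eq [Nonempty κ] (t : κ → E) {a μ : κ → ℝ} (ha : ∀ i, 0 ≤ a i)
    (hμ : ∀ i, 0 < μ i) (hμ1 : ∑ i, μ i = 1) :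
    ∃ (j : κ) (a' : κ → ℝ), (∀ i, 0 ≤ a' i) ∧ ∑ i, a' i = ∑ i, a i ∧
      ∑ i, a' i • Function.update t j (∑ i, μ i • t i) i = ∑ i, a i • t i := by
  obtain ⟨j, -, hj⟩ := Finset.univ.exists_min_image (fun i => a i / μ i) Finset.univ_nonempty
  set c := a j / μ j
  set y := ∑ i, μ i • t i
  have hc : 0 ≤ c := div_nonneg (ha j) (hμ j).le
  have hcμ : ∀ i, c * μ i ≤ a i := fun i => (le_div_iff₀ (hμ i)).1 (hj i (Finset.mem_univ i))
  have hcj : c * μ j = a j := div_mul_cancel₀ _ (hμ j).ne'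
  refine ⟨j, fun i => a i - c * μ i + (Pi.single j c : κ → ℝ) i, fun i => ?_, ?_, ?_⟩
  · have : 0 ≤ (Pi.single j c : κ → ℝ) i := by rcases eq_or_ne i j with rfl | hi <;> simp [*]
    linarith [hcμ i]
  · simp [Finset.sum_add_distrib, Finset.sum_sub_distrib, ← Finset.mul_sum, hμ1]
  · have hterm : ∀ i, (a i - c * μ i + (Pi.single j c : κ → ℝ) i) • Function.update t j y i =
        (a i - c * μ i) • t i + (Pi.single j (c • y) : κ → E) i := by
      intro i
      rcases eq_or_ne i j with rfl | hi
      · simp [hcj]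
      · simp [hi]
    simp [hterm, Finset.sum_add_distrib, sub_smul, Finset.sum_sub_distrib, mul_smul,
      ← Finset.smul_sum, y]

end Stellar

section HomogMatrix

variable {d : ℕ}

-- Column `c` is `(t c, 1)`; `|det|` is the normalized volume of the simplex `conv t`.
def homogMatrix (t : Fin (d + 1) → Fin d → ℝ) : Matrix (Fin (d + 1)) (Fin (d + 1)) ℝ :=
  Matrix.of fun r c => Fin.snoc (α := fun _ => ℝ) (t c) 1 r

theorem det_homogMatrix_ne_zero {t : Fin (d + 1) → Fin d → ℝ} (ht : AffineIndependent ℝ t) :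
    (homogMatrix t).det ≠ 0 := by
  intro h0
  obtain ⟨v, hv0, hv⟩ := Matrix.exists_mulVec_eq_zero_iff.mpr h0
  refine hv0 (funext fun i => ht.eq_zero_of_sum_eq_zero (s := Finset.univ) ?_ ?_ i
    (Finset.mem_univ i))
  · simpa [homogMatrix, Matrix.mulVec, dotProduct] using congrFun hv (Fin.last d)
  · ext s
    simpa [homogMatrix, Matrix.mulVec, dotProduct, mul_comm] using congrFun hv s.castSucc

theorem exists_abs_det_homogMatrix_eq_natCast {t : Fin (d + 1) → Fin d → ℝ}
    (ht : ∀ i, IsLatticePt (t i)) : ∃ m : ℕ, |(homogMatrix t).det| = m := by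
  have hint : ∀ r c, ∃ z : ℤ, homogMatrix t r c = z := by
    intro r c
    induction r using Fin.lastCases with
    | last => exact ⟨1, by simp [homogMatrix]⟩
    | cast s =>
      obtain ⟨z, hz⟩ := ht c s
      exact ⟨z, by simp [homogMatrix, hz]⟩
  choose N hN using hint
  have hM : homogMatrix t = (Matrix.of N).map (Int.castRingHom ℝ) := by
    ext r c
    simp [hN]
  refine ⟨(Matrix.of N).det.natAbs, ?_⟩
  rw [hM, ← RingHom.mapMatrix_apply, ← RingHom.map_det, Nat.cast_natAbs, Int.cast_abs]
  rfl

theorem det_homogMatrix_update_sum_smul (t : Fin (d + 1) → Fin d → ℝ) {μ : Fin (d + 1) → ℝ}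
    (hμ : ∑ i, μ i = 1) (j : Fin (d + 1)) :
    (homogMatrix (Function.update t j (∑ i, μ i • t i))).det = μ j * (homogMatrix t).det := by
  have hcol : homogMatrix (Function.update t j (∑ i, μ i • t i)) =
      (homogMatrix t).updateCol j fun r => ∑ i, μ i • homogMatrix t r i := by
    ext r c
    rcases eq_or_ne c j with rfl | hc
    · induction r using Fin.lastCases <;> simp [homogMatrix, hμ, Finset.sum_apply]
    · simp [homogMatrix, hc]
  rw [hcol, Matrix.det_updateCol_sum, smul_eq_mul]

end HomogMatrix

-- `LatticeShellEmpty P Q k` is the paper's `L(kQ \ ((k - 1)Q ∪ kP)) = ∅`.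
def LatticeShellEmpty {ι : Type} (P Q : Set (ι → ℝ)) (k : ℕ) : Prop :=
  ∀ x : ι → ℝ, IsLatticePt x → x ∈ (k : ℝ) • Q → x ∈ ((k : ℝ) - 1) • Q ∨ x ∈ (k : ℝ) • P

section Shell

variable {ι : Type} {P Q : Set (ι → ℝ)}

theorem add_mem_smul_or_mem_smul (hQc : Convex ℝ Q) (hPc : Convex ℝ P) (h0Q : (0 : ι → ℝ) ∈ Q)
    (hPQ : P ⊆ Q) {p x : ι → ℝ} {r : ℝ} (hr : 1 ≤ r) (hp : p ∈ P ∨ p = 0)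
    (hx : x ∈ (r - 1) • Q ∨ x ∈ r • P) : p + x ∈ r • Q ∨ p + x ∈ (r + 1) • P := by
  rcases hp with hp | rfl <;> rcases hx with hx | hx
  · left
    simpa using hQc.add_mem_add_one_smul (sub_nonneg.2 hr) (hPQ hp) hx
  · exact .inr (hPc.add_mem_add_one_smul (by linarith) hp hx)
  · exact .inl (by simpa using hQc.smul_set_subset_smul_set h0Q (by linarith) (by linarith) hx)
  · exact .inl (by simpa using smul_set_mono hPQ hx)

theorem mem_smul_or_mem_smul_of_sub_mem (hQc : Convex ℝ Q) (hPc : Convex ℝ P)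
    (h0Q : (0 : ι → ℝ) ∈ Q) (hPQ : P ⊆ Q) (hlat : ∀ z ∈ Q, IsLatticePt z → z ∈ P ∨ z = 0)
    {n : ℕ} (hprev : 1 ≤ n → LatticeShellEmpty P Q n) {p x : ι → ℝ} (hp : p ∈ Q)
    (hpl : IsLatticePt p) (hxp : x - p ∈ (n : ℝ) • Q) (hxpl : IsLatticePt (x - p)) :
    x ∈ (n : ℝ) • Q ∨ x ∈ ((n : ℝ) + 1) • P := by
  rcases Nat.eq_zero_or_pos n with rfl | hn
  · obtain rfl : x = p := by simpa [zero_smul_set ⟨p, hp⟩, sub_eq_zero] using hxp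
    rcases hlat x hp hpl with hx | rfl
    · exact .inr (by simpa using hx)
    · exact .inl (by simp [zero_smul_set ⟨_, hp⟩])
  · simpa using add_mem_smul_or_mem_smul hQc hPc h0Q hPQ (by exact_mod_cast hn)
      (hlat p hp hpl) (hprev hn _ hxpl hxp)

theorem mem_smul_or_mem_smul_of_one_le_coeff {κ : Type*} [Fintype κ] [DecidableEq κ]
    (hQc : Convex ℝ Q) (hPc : Convex ℝ P) (h0Q : (0 : ι → ℝ) ∈ Q) (hPQ : P ⊆ Q)
    (hlat : ∀ z ∈ Q, IsLatticePt z → z ∈ P ∨ z = 0) {n : ℕ}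
    (hprev : 1 ≤ n → LatticeShellEmpty P Q n) {z : κ → ι → ℝ} (hzQ : ∀ i, z i ∈ Q)
    (hzl : ∀ i, IsLatticePt (z i)) {b : κ → ℝ} (hb : ∀ i, 0 ≤ b i)
    (hsum : ∑ i, b i = n + 1) {j : κ} (hj : 1 ≤ b j) {x : ι → ℝ} (hx : x = ∑ i, b i • z i)
    (hxl : IsLatticePt x) : x ∈ (n : ℝ) • Q ∨ x ∈ ((n : ℝ) + 1) • P := by
  set b' : κ → ℝ := b - Pi.single j 1
  have hb' : ∀ i, 0 ≤ b' i := by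
    intro i
    rcases eq_or_ne i j with rfl | hi <;> simp [b', *]
  have hxz : x - z j = ∑ i, b' i • z i := by
    simp [b', hx, sub_smul, Finset.sum_sub_distrib]
  have hsum' : ∑ i, b' i = n := by
    simp [b', Finset.sum_sub_distrib, hsum]
  refine mem_smul_or_mem_smul_of_sub_mem hQc hPc h0Q hPQ hlat hprev (hzQ j) (hzl j) ?_
    (hxl.sub (hzl j))
  rw [hxz, ← hsum']
  exact hQc.sum_smul_mem_smul ⟨0, h0Q⟩ (fun i _ => hb' i) (fun i _ => hzQ i)

end Shell

section Descent

variable {n : ℕ} {P Q : Set (Fin (n + 1) → ℝ)}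

theorem mem_smul_or_mem_smul_of_simplex (hQc : Convex ℝ Q) (hPc : Convex ℝ P)
    (h0Q : (0 : Fin (n + 1) → ℝ) ∈ Q) (hPQ : P ⊆ Q)
    (hlat : ∀ z ∈ Q, IsLatticePt z → z ∈ P ∨ z = 0) (hprev : 1 ≤ n → LatticeShellEmpty P Q n)
    {x : Fin (n + 1) → ℝ} (hxl : IsLatticePt x) (m : ℕ) {t : Fin (n + 2) → Fin (n + 1) → ℝ}
    (htQ : ∀ i, t i ∈ Q) (htl : ∀ i, IsLatticePt (t i)) (hm : |(homogMatrix t).det| = m)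
    (hm0 : m ≠ 0) {a : Fin (n + 2) → ℝ} (ha : ∀ i, 0 ≤ a i) (hsum : ∑ i, a i = n + 1)
    (hx : x = ∑ i, a i • t i) : x ∈ (n : ℝ) • Q ∨ x ∈ ((n : ℝ) + 1) • P := by
  induction m using Nat.strong_induction_on generalizing t a with
  | _ m ih =>
  by_cases hbig : ∃ j, 1 ≤ a j
  · obtain ⟨j, hj⟩ := hbig
    exact mem_smul_or_mem_smul_of_one_le_coeff hQc hPc h0Q hPQ hlat hprev htQ htl ha hsum hj hx
      hxl
  push Not at hbig
  set μ : Fin (n + 2) → ℝ := fun i => 1 - a i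
  have hμ : ∀ i, 0 < μ i := fun i => sub_pos.2 (hbig i)
  have hμ1 : ∑ i, μ i = 1 := by
    simp [μ, Finset.sum_sub_distrib, hsum]
    ring
  have hμlt : ∀ i, μ i < 1 := by
    intro i
    obtain ⟨i', hi'⟩ := exists_ne i
    exact hμ1 ▸ Finset.single_lt_sum hi' (Finset.mem_univ i) (Finset.mem_univ i') (hμ i')
      fun k _ _ => (hμ k).le
  set y := ∑ i, μ i • t i
  have hyQ : y ∈ Q := hQc.sum_mem (fun i _ => (hμ i).le) hμ1 fun i _ => htQ i
  have hyl : IsLatticePt y := by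
    have : y = ∑ i, t i - x := by simp [y, μ, sub_smul, Finset.sum_sub_distrib, hx]
    exact this ▸ (IsLatticePt.sum fun i _ => htl i).sub hxl
  obtain ⟨j, a', ha', hsum', hx'⟩ := exists_sum_smul_update_eq t ha hμ hμ1
  set t' := Function.update t j y
  have ht'Q : ∀ i, t' i ∈ Q :=
    (Function.forall_update_iff t fun _ v => v ∈ Q).2 ⟨hyQ, fun i _ => htQ i⟩
  have ht'l : ∀ i, IsLatticePt (t' i) :=
    (Function.forall_update_iff t fun _ v => IsLatticePt v).2 ⟨hyl, fun i _ => htl i⟩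
  obtain ⟨m', hm'⟩ := exists_abs_det_homogMatrix_eq_natCast ht'l
  have hdet : (m' : ℝ) = μ j * m := by
    rw [← hm', ← hm, det_homogMatrix_update_sum_smul t hμ1 j, abs_mul, abs_of_pos (hμ j)]
  have hm'm : m' < m := by
    have : (m' : ℝ) < m := by
      rw [hdet]
      exact mul_lt_of_lt_one_left (by positivity) (hμlt j)
    exact_mod_cast this
  have hm'0 : m' ≠ 0 := by
    have : (m' : ℝ) ≠ 0 := by
      rw [hdet]
      exact mul_ne_zero (hμ j).ne' (by exact_mod_cast hm0)
    exact_mod_cast this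
  exact ih m' hm'm ht'Q ht'l hm' hm'0 ha' (hsum'.trans hsum) (hx.trans hx'.symm)

end Descent

section Simplex

variable {d : ℕ} {P Q : Set (Fin d → ℝ)}

theorem mem_smul_or_mem_smul_of_affineIndependent {κ : Type*} [Fintype κ] (hQc : Convex ℝ Q)
    (hPc : Convex ℝ P) (h0Q : (0 : Fin d → ℝ) ∈ Q) (hPQ : P ⊆ Q)
    (hlat : ∀ z ∈ Q, IsLatticePt z → z ∈ P ∨ z = 0) {n : ℕ} (hdn : d ≤ n + 1)
    (hprev : 1 ≤ n → LatticeShellEmpty P Q n) {z : κ → Fin d → ℝ} (hz : AffineIndependent ℝ z)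
    (hzQ : ∀ i, z i ∈ Q) (hzl : ∀ i, IsLatticePt (z i)) {b : κ → ℝ} (hb : ∀ i, 0 ≤ b i)
    (hsum : ∑ i, b i = n + 1) {x : Fin d → ℝ} (hx : x = ∑ i, b i • z i) (hxl : IsLatticePt x) :
    x ∈ (n : ℝ) • Q ∨ x ∈ ((n : ℝ) + 1) • P := by
  classical
  by_cases hbig : ∃ j, 1 ≤ b j
  · obtain ⟨j, hj⟩ := hbig
    exact mem_smul_or_mem_smul_of_one_le_coeff hQc hPc h0Q hPQ hlat hprev hzQ hzl hb hsum hj hx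
      hxl
  push Not at hbig
  have hcard_gt : n + 1 < Fintype.card κ := by
    have : ∑ i, b i < ∑ _i : κ, (1 : ℝ) := by
      refine Finset.sum_lt_sum_of_nonempty (Finset.univ_nonempty_iff.2 ?_) fun i _ => hbig i
      by_contra h
      rw [not_nonempty_iff] at h
      rw [Finset.univ_eq_empty, Finset.sum_empty] at hsum
      linarith [n.cast_nonneg (α := ℝ)]
    simp only [hsum, Finset.sum_const, Finset.card_univ, nsmul_eq_mul, mul_one] at this
    exact_mod_cast this
  have hcard_le : Fintype.card κ ≤ d + 1 := by
    have := hz.card_le_finrank_succ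
    have := (vectorSpan ℝ (range z)).finrank_le
    simp only [Module.finrank_fin_fun] at this
    omega
  obtain rfl : d = n + 1 := by omega
  let e : Fin (n + 2) ≃ κ := (Fintype.equivFinOfCardEq (by omega)).symm
  obtain ⟨m, hm⟩ := exists_abs_det_homogMatrix_eq_natCast (t := z ∘ e) fun i => hzl _
  refine mem_smul_or_mem_smul_of_simplex hQc hPc h0Q hPQ hlat hprev hxl m (fun i => hzQ _)
    (fun i => hzl _) hm ?_ (fun i => hb _) ((e.sum_comp b).trans hsum)
    (hx.trans (e.sum_comp fun i => b i • z i).symm)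
  have := det_homogMatrix_ne_zero (hz.comp_embedding e.toEmbedding)
  rintro rfl
  simp_all

theorem latticeShellEmpty_of_le_sub_one (hQc : Convex ℝ Q) (hPc : Convex ℝ P)
    (h0Q : (0 : Fin d → ℝ) ∈ Q) (hPQ : P ⊆ Q) (hlat : ∀ z ∈ Q, IsLatticePt z → z ∈ P ∨ z = 0)
    {V : Set (Fin d → ℝ)} (hVl : ∀ v ∈ V, IsLatticePt v) (hQV : Q = convexHull ℝ (insert 0 V))
    (hc : ∀ k, 1 ≤ k → k ≤ d - 1 → LatticeShellEmpty P Q k) {k : ℕ} (hk : 1 ≤ k) :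
    LatticeShellEmpty P Q k := by
  induction k using Nat.strong_induction_on with
  | _ k ih =>
  by_cases hkd : k ≤ d - 1
  · exact hc k hk hkd
  obtain ⟨n, rfl⟩ : ∃ n, k = n + 1 := ⟨k - 1, by omega⟩
  rintro _ hxl ⟨q, hq, rfl⟩
  rw [hQV] at hq
  obtain ⟨κ, _, z, w, hzV, hz, hw, hw1, rfl⟩ := eq_pos_convex_span_of_mem_convexHull hq
  have hzQ : ∀ i, z i ∈ Q := fun i => hQV ▸ subset_convexHull ℝ _ (hzV ⟨i, rfl⟩)
  have hzl : ∀ i, IsLatticePt (z i) := fun i => by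
    rcases hzV ⟨i, rfl⟩ with h | h
    · exact h ▸ IsLatticePt.zero
    · exact hVl _ h
  simpa using mem_smul_or_mem_smul_of_affineIndependent hQc hPc h0Q hPQ hlat (by omega)
    (fun hn => ih n (by omega) hn) hz hzQ hzl (b := fun i => (n + 1) * w i)
    (fun i => mul_nonneg (by positivity) (hw i).le) (by simp [← Finset.mul_sum, hw1])
    (by simp [Finset.smul_sum, mul_smul]) hxl

end Simplex

section Normal

variable {ι : Type} {P Q : Set (ι → ℝ)}

theorem latticeShellEmpty_of_isNormal (hQc : Convex ℝ Q) (hPc : Convex ℝ P)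
    (h0Q : (0 : ι → ℝ) ∈ Q) (hlat : ∀ z ∈ Q, IsLatticePt z → z ∈ P ∨ z = 0) (hQ : IsNormal Q)
    {k : ℕ} (hk : 1 ≤ k) : LatticeShellEmpty P Q k := by
  intro x hxl hxQ
  obtain ⟨f, hf, rfl⟩ := hQ k hk x hxQ hxl
  by_cases hz : ∃ i, f i = 0
  · obtain ⟨i, hi⟩ := hz
    left
    have := hQc.sum_smul_mem_smul ⟨0, h0Q⟩ (s := Finset.univ.erase i) (w := fun _ => 1)
      (by simp) fun j _ => (hf j).1
    rw [← Finset.add_sum_erase _ _ (Finset.mem_univ i), hi, zero_add]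
    simpa [Finset.card_erase_of_mem, Nat.cast_sub hk] using this
  · push Not at hz
    have hfP : ∀ i, f i ∈ P := fun i => (hlat _ (hf i).1 (hf i).2).resolve_right (hz i)
    right
    simpa using hPc.sum_smul_mem_smul ⟨_, hfP ⟨0, hk⟩⟩ (s := Finset.univ) (w := fun _ => 1)
      (by simp) fun i _ => hfP i

theorem isNormal_of_latticeShellEmpty (h0Q : (0 : ι → ℝ) ∈ Q) (hPQ : P ⊆ Q) (hP : IsNormal P)
    (hshell : ∀ k, 1 ≤ k → LatticeShellEmpty P Q k) : IsNormal Q := by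
  suffices ∀ c : ℕ, ∀ x, x ∈ (c : ℝ) • Q → IsLatticePt x →
      ∃ f : Fin c → ι → ℝ, (∀ i, f i ∈ Q ∧ IsLatticePt (f i)) ∧ x = ∑ i, f i from
    fun c _ => this c
  intro c
  induction c with
  | zero =>
    intro x hx _
    exact ⟨Fin.elim0, fun i => i.elim0, by simpa [zero_smul_set ⟨0, h0Q⟩] using hx⟩
  | succ n ih =>
    intro x hxQ hxl
    rcases hshell (n + 1) n.succ_pos x hxl hxQ with hx | hx
    · obtain ⟨f, hf, rfl⟩ := ih x (by simpa using hx) hxl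
      refine ⟨Fin.snoc f 0, fun i => ?_, by simp [Fin.sum_univ_castSucc]⟩
      induction i using Fin.lastCases <;> simp [hf, h0Q, IsLatticePt.zero]
    · obtain ⟨f, hf, rfl⟩ := hP (n + 1) n.succ_pos _ hx hxl
      exact ⟨f, fun i => ⟨hPQ (hf i).1, (hf i).2⟩, rfl⟩

end Normal

theorem stmt_11_general (d : ℕ) (P : Set (Fin d → ℝ))
    (hP : IsLatticePolytope P) (hPn : IsNormal P)
    (Q : Set (Fin d → ℝ)) (hQ : Q = convexHull ℝ (insert 0 P))
    (hQlat : {x ∈ Q | IsLatticePt x} = {x ∈ P | IsLatticePt x} ∪ {0}) :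
    (IsNormal Q ↔
      (∀ k : ℕ, 1 ≤ k → ∀ x : Fin d → ℝ, IsLatticePt x → x ∈ (k : ℝ) • Q →
        x ∈ ((k : ℝ) - 1) • Q ∨ x ∈ (k : ℝ) • P)) ∧
    ((∀ k : ℕ, 1 ≤ k → ∀ x : Fin d → ℝ, IsLatticePt x → x ∈ (k : ℝ) • Q →
        x ∈ ((k : ℝ) - 1) • Q ∨ x ∈ (k : ℝ) • P) ↔
      (∀ k : ℕ, 1 ≤ k → k ≤ d - 1 → ∀ x : Fin d → ℝ, IsLatticePt x → x ∈ (k : ℝ) • Q →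
        x ∈ ((k : ℝ) - 1) • Q ∨ x ∈ (k : ℝ) • P)) := by
  obtain ⟨V, -, -, hVl, hPV⟩ := hP
  have hQV : Q = convexHull ℝ (insert 0 V) := by
    rw [hQ, hPV, insert_eq, insert_eq, convexHull_convexHull_union_right]
  have hPc : Convex ℝ P := hPV ▸ convex_convexHull ℝ V
  have hQc : Convex ℝ Q := hQ ▸ convex_convexHull ℝ _
  have h0Q : (0 : Fin d → ℝ) ∈ Q := hQ ▸ subset_convexHull ℝ _ (mem_insert 0 P)
  have hPQ : P ⊆ Q := hQ ▸ (subset_insert 0 P).trans (subset_convexHull ℝ _)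
  have hlat : ∀ z ∈ Q, IsLatticePt z → z ∈ P ∨ z = 0 := fun z hzQ hzl => by
    have : z ∈ {x ∈ Q | IsLatticePt x} := ⟨hzQ, hzl⟩
    rw [hQlat] at this
    exact this.imp And.left id
  exact ⟨⟨fun hN _ => latticeShellEmpty_of_isNormal hQc hPc h0Q hlat hN,
      isNormal_of_latticeShellEmpty h0Q hPQ hPn⟩,
    ⟨fun hb k hk _ => hb k hk,
      fun hc _ => latticeShellEmpty_of_le_sub_one hQc hPc h0Q hPQ hlat hVl hQV hc⟩⟩

/-- Criterion for `Q = conv(P, 0)` to be a quantum jump over the normal polytope `P`: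
`Q` is normal iff `L(kQ \ ((k-1)Q ∪ kP)) = ∅` for all `k ≥ 1`, iff this holds for
`k = 1, …, d-1`. -/
theorem stmt_11 (d : ℕ) (P : Set (Fin d → ℝ))
    (hP : IsLatticePolytope P) (hPn : IsNormal P)
    (hdim : Module.finrank ℝ (affineSpan ℝ P).direction = d)
    (h0 : (0 : Fin d → ℝ) ∉ P)
    (Q : Set (Fin d → ℝ)) (hQ : Q = convexHull ℝ (insert 0 P))
    (hQlat : {x ∈ Q | IsLatticePt x} = {x ∈ P | IsLatticePt x} ∪ {0}) :
    (IsNormal Q ↔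
      (∀ k : ℕ, 1 ≤ k → ∀ x : Fin d → ℝ, IsLatticePt x → x ∈ (k : ℝ) • Q →
        x ∈ ((k : ℝ) - 1) • Q ∨ x ∈ (k : ℝ) • P)) ∧
    ((∀ k : ℕ, 1 ≤ k → ∀ x : Fin d → ℝ, IsLatticePt x → x ∈ (k : ℝ) • Q →
        x ∈ ((k : ℝ) - 1) • Q ∨ x ∈ (k : ℝ) • P) ↔
      (∀ k : ℕ, 1 ≤ k → k ≤ d - 1 → ∀ x : Fin d → ℝ, IsLatticePt x → x ∈ (k : ℝ) • Q →
        x ∈ ((k : ℝ) - 1) • Q ∨ x ∈ (k : ℝ) • P)) :=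
  stmt_11_general d P hP hPn Q hQ hQlat
end

section
/- Let $l_1, \dots, l_d$ be linearly independent real linear forms on $\mathbb{R}^d$, let $(z_1, \dots, z_d) \in \mathbb{R}^d$, and let $E = \{\xi \in \mathbb{R}^d : \sum_{i=1}^d (l_i(\xi) - z_i)^2 \le 1\}$ be the corresponding ellipsoid. Let $P = \operatorname{conv}(E \cap \mathbb{Z}^d)$. Then for every integer $k \ge 2$ and every point $y \in kP$, there exists a lattice point $w \in P \cap \mathbb{Z}^d$ such that $y - w \in (k-1)E$. -/
open Set Pointwise

/-- A linear form attains, over any set `S`, a value at least its value at any point of the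
convex hull of `S`. -/
lemma exists_le_of_mem_convexHull_aux {n : Type} {S : Set (n → ℝ)} {p : n → ℝ}
    (hp : p ∈ convexHull ℝ S) (L : (n → ℝ) →ₗ[ℝ] ℝ) :
    ∃ w ∈ S, L p ≤ L w := by
  obtain ⟨ι, _, w, x, hw₀, hw₁, hx, hxp⟩ := mem_convexHull_iff_exists_fintype.1 hp
  by_contra h
  push_neg at h
  set t := Finset.univ.filter (fun i => 0 < w i) with ht
  have hts : ∑ i ∈ t, w i = 1 := by
    rw [← hw₁]
    refine Finset.sum_subset (Finset.subset_univ _) (fun i _ hi => ?_)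
    simp only [ht, Finset.mem_filter, Finset.mem_univ, true_and, not_lt] at hi
    linarith [hw₀ i]
  have htne : t.Nonempty := Finset.nonempty_of_sum_ne_zero (by rw [hts]; norm_num)
  have hLp : L p = ∑ i ∈ t, w i * L (x i) := by
    rw [← hxp, map_sum]
    simp only [map_smul, smul_eq_mul]
    refine (Finset.sum_subset (Finset.subset_univ _) (fun i _ hi => ?_)).symm
    simp only [ht, Finset.mem_filter, Finset.mem_univ, true_and, not_lt] at hi
    have : w i = 0 := le_antisymm hi (hw₀ i)
    simp [this]
  have hlt : ∑ i ∈ t, w i * L (x i) < ∑ i ∈ t, w i * L p := by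
    refine Finset.sum_lt_sum_of_nonempty htne (fun i hi => ?_)
    have hwi : 0 < w i := (Finset.mem_filter.1 hi).2
    exact mul_lt_mul_of_pos_left (h (x i) (hx i)) hwi
  rw [← Finset.sum_mul, hts, one_mul] at hlt
  rw [hLp] at hlt
  exact lt_irrefl _ hlt

/-- For the polytope `P = conv(E ∩ ℤ^d)` of an ellipsoid `E`, every point `y ∈ kP`
(`k ≥ 2`) admits a lattice point `w ∈ P` with `y - w ∈ (k-1)E`. -/
theorem stmt_12 (d : ℕ) (l : Fin d → ((Fin d → ℝ) →ₗ[ℝ] ℝ))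
    (hl : LinearIndependent ℝ l) (z : Fin d → ℝ)
    (E : Set (Fin d → ℝ)) (hE : E = {ξ | ∑ i, (l i ξ - z i) ^ 2 ≤ 1})
    (P : Set (Fin d → ℝ)) (hP : P = convexHull ℝ {x ∈ E | IsLatticePt x}) :
    ∀ k : ℕ, 2 ≤ k → ∀ y ∈ (k : ℝ) • P,
      ∃ w : Fin d → ℝ, IsLatticePt w ∧ w ∈ P ∧ y - w ∈ ((k : ℝ) - 1) • E := by
  intro k hk y hy
  have hc : (2 : ℝ) ≤ (k : ℝ) := by exact_mod_cast hk
  set c : ℝ := (k : ℝ) with hcdef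
  have hc0 : (0 : ℝ) < c := by linarith
  have hc1 : (0 : ℝ) < c - 1 := by linarith
  -- E is convex
  have hEconv : Convex ℝ E := by
    rw [hE]
    intro x hx v hv a b ha hb hab
    simp only [Set.mem_setOf_eq] at hx hv ⊢
    have key : ∀ i : Fin d, (l i (a • x + b • v) - z i) ^ 2 ≤
        a * (l i x - z i) ^ 2 + b * (l i v - z i) ^ 2 := by
      intro i
      have h1 : l i (a • x + b • v) = a * l i x + b * l i v := by
        simp [map_add, map_smul, smul_eq_mul]
      rw [h1]
      have hb' : b = 1 - a := by linarith
      subst hb'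
      nlinarith [mul_nonneg (mul_nonneg ha hb) (sq_nonneg (l i x - l i v))]
    calc ∑ i, (l i (a • x + b • v) - z i) ^ 2
        ≤ ∑ i, (a * (l i x - z i) ^ 2 + b * (l i v - z i) ^ 2) :=
          Finset.sum_le_sum fun i _ => key i
      _ = a * ∑ i, (l i x - z i) ^ 2 + b * ∑ i, (l i v - z i) ^ 2 := by
          rw [Finset.sum_add_distrib, Finset.mul_sum, Finset.mul_sum]
      _ ≤ a * 1 + b * 1 :=
          add_le_add (mul_le_mul_of_nonneg_left hx ha) (mul_le_mul_of_nonneg_left hv hb)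
      _ = 1 := by linarith
  have hPE : P ⊆ E := by
    rw [hP]
    exact convexHull_min (fun x hx => hx.1) hEconv
  obtain ⟨p, hpP, rfl⟩ := Set.mem_smul_set.1 hy
  have hpE : p ∈ E := hPE hpP
  have hpE' : ∑ i, (l i p - z i) ^ 2 ≤ 1 := by rw [hE] at hpE; exact hpE
  -- the linear form
  set a : Fin d → ℝ := fun i => c * (l i p - z i) with ha
  set L : (Fin d → ℝ) →ₗ[ℝ] ℝ := ∑ i, a i • l i with hL
  have hLapp : ∀ ξ, L ξ = ∑ i, a i * l i ξ := by
    intro ξ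
    rw [hL]
    simp [LinearMap.sum_apply, LinearMap.smul_apply, smul_eq_mul]
  -- get the lattice point w
  have hpHull : p ∈ convexHull ℝ {x ∈ E | IsLatticePt x} := by rw [← hP]; exact hpP
  obtain ⟨w, hwS, hLw⟩ := exists_le_of_mem_convexHull_aux hpHull L
  have hwE : ∑ i, (l i w - z i) ^ 2 ≤ 1 := by
    have := hwS.1; rw [hE] at this; exact this
  refine ⟨w, hwS.2, ?_, ?_⟩
  · rw [hP]; exact subset_convexHull ℝ _ hwS
  -- the key estimate
  set b : Fin d → ℝ := fun i => l i w - z i with hb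
  have hA : ∑ i, a i ^ 2 ≤ c ^ 2 := by
    calc ∑ i, a i ^ 2 = c ^ 2 * ∑ i, (l i p - z i) ^ 2 := by
          rw [Finset.mul_sum]; exact Finset.sum_congr rfl fun i _ => by rw [ha]; ring
      _ ≤ c ^ 2 * 1 := mul_le_mul_of_nonneg_left hpE' (by positivity)
      _ = c ^ 2 := by ring
  have hC : ∑ i, a i ^ 2 ≤ c * ∑ i, a i * b i := by
    rw [hLapp, hLapp] at hLw
    have h1 : ∑ i, a i ^ 2 = c * ∑ i, a i * (l i p - z i) := by
      rw [Finset.mul_sum]; exact Finset.sum_congr rfl fun i _ => by rw [ha]; ring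
    have h2 : ∑ i, a i * (l i p - z i) ≤ ∑ i, a i * b i := by
      have : ∑ i, a i * (l i p - z i) = (∑ i, a i * l i p) - ∑ i, a i * z i := by
        rw [← Finset.sum_sub_distrib]; exact Finset.sum_congr rfl fun i _ => by ring
      rw [this]
      have : ∑ i, a i * b i = (∑ i, a i * l i w) - ∑ i, a i * z i := by
        rw [← Finset.sum_sub_distrib]; exact Finset.sum_congr rfl fun i _ => by rw [hb]; ring
      rw [this]
      exact sub_le_sub_right hLw _
    calc ∑ i, a i ^ 2 = c * ∑ i, a i * (l i p - z i) := h1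
      _ ≤ c * ∑ i, a i * b i := mul_le_mul_of_nonneg_left h2 (le_of_lt hc0)
  have hexp : ∑ i, (a i - b i) ^ 2 =
      ∑ i, a i ^ 2 - 2 * ∑ i, a i * b i + ∑ i, b i ^ 2 := by
    rw [Finset.mul_sum, ← Finset.sum_sub_distrib, ← Finset.sum_add_distrib]
    exact Finset.sum_congr rfl fun i _ => by ring
  have hAnn : 0 ≤ ∑ i, a i ^ 2 := Finset.sum_nonneg fun i _ => sq_nonneg _
  have hkey : ∑ i, (a i - b i) ^ 2 ≤ (c - 1) ^ 2 := by
    nlinarith [mul_nonneg (sub_nonneg.2 hA) (sub_nonneg.2 hc), hC, hwE, hexp, hc0]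
  -- conclude
  rw [Set.mem_smul_set_iff_inv_smul_mem₀ (ne_of_gt hc1), hE]
  simp only [Set.mem_setOf_eq]
  have hterm : ∀ i : Fin d, l i ((c - 1)⁻¹ • (c • p - w)) - z i =
      (c - 1)⁻¹ * (a i - b i) := by
    intro i
    rw [map_smul, map_sub, map_smul, smul_eq_mul, smul_eq_mul, ha, hb]
    field_simp
    ring
  calc ∑ i, (l i ((c - 1)⁻¹ • (c • p - w)) - z i) ^ 2
      = ((c - 1)⁻¹) ^ 2 * ∑ i, (a i - b i) ^ 2 := by
        rw [Finset.mul_sum]; exact Finset.sum_congr rfl fun i _ => by rw [hterm i]; ring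
    _ ≤ ((c - 1)⁻¹) ^ 2 * (c - 1) ^ 2 := mul_le_mul_of_nonneg_left hkey (by positivity)
    _ = 1 := by field_simp
end

section
/- Let $E \subset \mathbb{R}^d$ be an ellipsoid $\{\xi : \sum_{i=1}^d (l_i(\xi) - z_i)^2 \le 1\}$ for linearly independent linear forms $l_1,\dots,l_d$ and a center point $(z_1,\dots,z_d)$, and let $P = \operatorname{conv}(E \cap \mathbb{Z}^d)$. Then every lattice point $y \in (2P) \cap \mathbb{Z}^d$ can be written as $y = w_1 + w_2$ with $w_1, w_2 \in P \cap \mathbb{Z}^d$. -/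
open Set Pointwise

/-- For the polytope `P = conv(E ∩ ℤ^d)` of an ellipsoid `E`, every lattice point of `2P`
is a sum of two lattice points of `P`. -/
theorem stmt_13 (d : ℕ) (l : Fin d → ((Fin d → ℝ) →ₗ[ℝ] ℝ))
    (hl : LinearIndependent ℝ l) (z : Fin d → ℝ)
    (E : Set (Fin d → ℝ)) (hE : E = {ξ | ∑ i, (l i ξ - z i) ^ 2 ≤ 1})
    (P : Set (Fin d → ℝ)) (hP : P = convexHull ℝ {x ∈ E | IsLatticePt x}) :
    ∀ y : Fin d → ℝ, IsLatticePt y → y ∈ (2 : ℝ) • P →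
      ∃ w₁ w₂ : Fin d → ℝ, IsLatticePt w₁ ∧ w₁ ∈ P ∧ IsLatticePt w₂ ∧ w₂ ∈ P ∧
        y = w₁ + w₂ := by
  intro y hy hy2
  obtain ⟨x, hxP, hx⟩ := Set.mem_smul_set.mp hy2
  rw [hP, convexHull_eq] at hxP
  obtain ⟨ι, t, w, f, hw0, hw1, hfs, hcm⟩ := hxP
  have hxsum : x = ∑ j ∈ t, w j • f j := by
    rw [← hcm, Finset.centerMass_eq_of_sum_1 _ _ hw1]
  have hly : ∀ i, l i y = 2 * l i x := by
    intro i; rw [← hx, map_smul, smul_eq_mul]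
  have hlx : ∀ i, ∑ j ∈ t, w j * l i (f j) = l i x := by
    intro i
    rw [hxsum, map_sum]
    exact Finset.sum_congr rfl fun j _ => by rw [map_smul, smul_eq_mul]
  have key : ∑ j ∈ t, w j * (∑ i, (l i (y - f j) - z i) ^ 2) ≤ 1 := by
    have h1 : ∀ j ∈ t, ∑ i, (l i (y - f j) - z i) ^ 2
        = (∑ i, (l i (f j) - z i) ^ 2)
          + ∑ i, (4 * (l i x - z i) * (l i x - l i (f j))) := by
      intro j _
      rw [← Finset.sum_add_distrib]
      refine Finset.sum_congr rfl fun i _ => ?_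
      rw [map_sub, hly i]; ring
    calc ∑ j ∈ t, w j * (∑ i, (l i (y - f j) - z i) ^ 2)
        = ∑ j ∈ t, (w j * (∑ i, (l i (f j) - z i) ^ 2)
            + ∑ i, w j * (4 * (l i x - z i) * (l i x - l i (f j)))) := by
          refine Finset.sum_congr rfl fun j hj => ?_
          rw [h1 j hj, mul_add, Finset.mul_sum, Finset.mul_sum]
      _ = ∑ j ∈ t, w j * (∑ i, (l i (f j) - z i) ^ 2)
            + ∑ i, ∑ j ∈ t, w j * (4 * (l i x - z i) * (l i x - l i (f j))) := by
          rw [Finset.sum_add_distrib, Finset.sum_comm]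
      _ = ∑ j ∈ t, w j * (∑ i, (l i (f j) - z i) ^ 2) := by
          have hzero : ∀ i, ∑ j ∈ t, w j * (4 * (l i x - z i) * (l i x - l i (f j))) = 0 := by
            intro i
            have e : ∑ j ∈ t, w j * (4 * (l i x - z i) * (l i x - l i (f j)))
                = 4 * (l i x - z i) * ((∑ j ∈ t, w j) * l i x - ∑ j ∈ t, w j * l i (f j)) := by
              rw [Finset.sum_mul, ← Finset.sum_sub_distrib, Finset.mul_sum]
              exact Finset.sum_congr rfl fun j _ => by ring
            rw [e, hw1, hlx i]; ring
          simp [hzero]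
      _ ≤ ∑ j ∈ t, w j * 1 := by
          refine Finset.sum_le_sum fun j hj => ?_
          have hfj := hfs j hj
          have hE1 : ∑ i, (l i (f j) - z i) ^ 2 ≤ 1 := by
            have hmem : f j ∈ E := hfj.1
            rw [hE] at hmem; exact hmem
          exact mul_le_mul_of_nonneg_left hE1 (hw0 j hj)
      _ = 1 := by simpa using hw1
  obtain ⟨j, hjt, hwj, hqj⟩ : ∃ j ∈ t, 0 < w j ∧ ∑ i, (l i (y - f j) - z i) ^ 2 ≤ 1 := by
    by_contra hcon
    push_neg at hcon
    obtain ⟨j0, hj0, hwj0⟩ : ∃ j ∈ t, 0 < w j := by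
      by_contra hz; push_neg at hz
      have h0 : ∑ j ∈ t, w j = 0 :=
        Finset.sum_eq_zero fun j hj => le_antisymm (hz j hj) (hw0 j hj)
      rw [hw1] at h0; norm_num at h0
    have hlt : (1 : ℝ) < ∑ j ∈ t, w j * (∑ i, (l i (y - f j) - z i) ^ 2) := by
      calc (1 : ℝ) = ∑ j ∈ t, w j := hw1.symm
        _ < ∑ j ∈ t, w j * (∑ i, (l i (y - f j) - z i) ^ 2) := by
          apply Finset.sum_lt_sum
          · intro j hj
            rcases lt_or_eq_of_le (hw0 j hj) with h | h
            · have := hcon j hj h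
              nlinarith
            · rw [← h]; simp
          · refine ⟨j0, hj0, ?_⟩
            have := hcon j0 hj0 hwj0
            nlinarith
    linarith
  have hfj := hfs j hjt
  have hlat2 : IsLatticePt (y - f j) := by
    intro i
    obtain ⟨n, hn⟩ := hy i
    obtain ⟨m, hm⟩ := hfj.2 i
    exact ⟨n - m, by simp [Pi.sub_apply, hn, hm]⟩
  refine ⟨f j, y - f j, hfj.2, ?_, hlat2, ?_, ?_⟩
  · rw [hP]; exact subset_convexHull ℝ _ hfj
  · rw [hP]
    refine subset_convexHull ℝ _ ⟨?_, hlat2⟩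
    rw [hE]; exact hqj
  · abel
end

section
/- For $d \ge 2$ and $w \ge 1$, let $P = \operatorname{conv}(0, \mathbf{e}_1, \dots, \mathbf{e}_{d-1}, -w\mathbf{e}_d) \subset \mathbb{R}^d$ and $z = \mathbf{e}_1 + \dots + \mathbf{e}_{d-1} + ((d-2)w + 1)\mathbf{e}_d$. Let $F = \operatorname{conv}(0, \mathbf{e}_1, \dots, \mathbf{e}_{d-1})$ be the horizontal facet of $P$. Then: $F$ is the only facet of $P$ visible from $z$; $\operatorname{width}_F P = w$; $\operatorname{conv}(P, z) \cap \mathbb{Z}^d = (P \cap \mathbb{Z}^d) \cup \{z\}$; and $\operatorname{ht}_P(z) = (d-2)w + 1$, which attains the general upper bound $1 + (d-2)\operatorname{width}_F P$ for quantum jumps. -/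
open Set Pointwise

/-!
Write `W = (d-2)w + 1` and `s = ∑_{k ≠ L} x_k`. Every point of `c • conv(P, z)` satisfies
`x_k ≥ 0`, `w (s - c) ≤ x_L`, `W (s - c) ≤ (d-2) x_L` and `x_L ≤ W x_k` (`k ≠ L`), as these hold
at the vertices. Conversely an integer solution with `x_L ≥ 1` remains a solution at level `c - 1`
after subtracting `z`, and one with `x_L ≤ 0` is greedily a sum of `c` lattice points `e_k` and
`-t e_L` (`0 ≤ t ≤ w`) of `P`. This gives normality, and at `c = 1` the lattice points.
For a facet functional `g` visible from `z`, the affine relation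
`w z + W (-w e_L) = w ∑_{k ≠ L} e_k + 0` forces `g > 0` at the vertex `-w e_L`; a facet of the
simplex `P` misses only one vertex, so `g` vanishes at `0` and at all `e_k`, hence `g = a x_L`,
and `a = -1` because `g` is primitive and negative at `z`.
-/

section Convex

variable {E : Type*} [AddCommGroup E] [Module ℝ E]

theorem convexHull_setOf_eq_zero_subset (g : E →ᵃ[ℝ] ℝ) {V : Set E} (hg : ∀ v ∈ V, 0 ≤ g v) :
    {x ∈ convexHull ℝ V | g x = 0} ⊆ convexHull ℝ {v ∈ V | g v = 0} := by
  set F := convexHull ℝ {v ∈ V | g v = 0}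
  have hF : ∀ x ∈ F, g x = 0 :=
    fun x hx => convexHull_min (fun v hv => hv.2) ((convex_singleton 0).affine_preimage g) hx
  have hconv : Convex ℝ (F ∪ {x | 0 < g x}) := by
    refine convex_iff_forall_pos.2 fun x hx y hy a b ha hb hab => ?_
    rcases hx with hx | hx <;> rcases hy with hy | hy
    · exact Or.inl (convex_convexHull ℝ _ hx hy ha.le hb.le hab)
    all_goals
      right
      change 0 < g (a • x + b • y)
      rw [Convex.combo_affine_apply hab, smul_eq_mul, smul_eq_mul]
    · rw [hF x hx, mul_zero, zero_add]; exact mul_pos hb hy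
    · rw [hF y hy, mul_zero, add_zero]; exact mul_pos ha hx
    · exact add_pos (mul_pos ha hx) (mul_pos hb hy)
  rintro x ⟨hx, hx0⟩
  have hV : V ⊆ F ∪ {x | 0 < g x} := fun v hv =>
    (hg v hv).eq_or_lt.imp (fun h => subset_convexHull ℝ _ ⟨hv, h.symm⟩) id
  exact (convexHull_min hV hconv hx).resolve_right fun h => h.ne' hx0

theorem finrank_direction_affineSpan_setOf_eq_zero_le {ι : Type*} [Fintype ι] (p : ι → E)
    (g : E →ᵃ[ℝ] ℝ) (hg : ∀ i, 0 ≤ g (p i)) :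
    Module.finrank ℝ (affineSpan ℝ {x ∈ convexHull ℝ (range p) | g x = 0}).direction ≤
      (Finset.univ.filter fun i => g (p i) = 0).card - 1 := by
  classical
  set s := Finset.univ.filter fun i => g (p i) = 0
  have hsub : {x ∈ convexHull ℝ (range p) | g x = 0} ⊆ convexHull ℝ ↑(s.image p) := by
    refine (convexHull_setOf_eq_zero_subset g (forall_mem_range.2 hg)).trans
      (convexHull_mono ?_)
    rintro _ ⟨⟨i, rfl⟩, hi⟩
    simpa [s] using ⟨i, hi, rfl⟩
  have hle : (affineSpan ℝ {x ∈ convexHull ℝ (range p) | g x = 0}).direction ≤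
      vectorSpan ℝ (s.image p : Set E) := by
    rw [← direction_affineSpan]
    exact AffineSubspace.direction_le
      ((affineSpan_mono ℝ hsub).trans (affineSpan_convexHull _).le)
  have := finiteDimensional_vectorSpan_of_finite ℝ (s.image p).finite_toSet
  refine (Submodule.finrank_mono hle).trans ?_
  rcases Nat.eq_zero_or_eq_succ_pred s.card with h | h
  · simp [Finset.card_eq_zero.1 h]
  · exact finrank_vectorSpan_image_finset_le ℝ p s h

theorem apply_le_of_mem_convexHull (ℓ : E →ₗ[ℝ] ℝ) {S : Set E} {b : ℝ}
    (hS : ∀ v ∈ S, ℓ v ≤ b) {x : E} (hx : x ∈ convexHull ℝ S) : ℓ x ≤ b :=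
  convexHull_min hS (convex_halfSpace_le ℓ.isLinear b) hx

theorem apply_le_mul_of_mem_smul_convexHull (ℓ : E →ₗ[ℝ] ℝ) {S : Set E} {b : ℝ}
    (hS : ∀ v ∈ S, ℓ v ≤ b) {c : ℝ} (hc : 0 ≤ c) {x : E} (hx : x ∈ c • convexHull ℝ S) :
    ℓ x ≤ c * b := by
  obtain ⟨y, hy, rfl⟩ := hx
  rw [map_smul, smul_eq_mul]
  exact mul_le_mul_of_nonneg_left (apply_le_of_mem_convexHull ℓ hS hy) hc

end Convex

theorem Set.exists_fin_sum_of_mem_nsmul {M : Type*} [AddCommMonoid M] {s : Set M} {n : ℕ}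
    {a : M} (ha : a ∈ n • s) : ∃ f : Fin n → M, (∀ i, f i ∈ s) ∧ a = ∑ i, f i := by
  obtain ⟨f, rfl⟩ := Set.mem_nsmul.1 ha
  exact ⟨fun i => f i, fun i => (f i).2, List.sum_ofFn⟩

theorem Set.mem_succ_nsmul_of_sub_mem {M : Type*} [AddCommGroup M] {s : Set M} {n : ℕ} {x q : M}
    (hq : q ∈ s) (hx : x - q ∈ n • s) : x ∈ (n + 1) • s := by
  rw [succ_nsmul]
  simpa using Set.add_mem_add hx hq

theorem AffineMap.apply_eq_sum_mul_sub_add {ι : Type*} [Fintype ι] [DecidableEq ι]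
    (g : (ι → ℝ) →ᵃ[ℝ] ℝ) (x : ι → ℝ) :
    g x = ∑ i, x i * (g (Pi.single i 1) - g 0) + g 0 := by
  have hlin (v : ι → ℝ) : g.linear v = g v - g 0 := by
    rw [g.decomp]; simp
  have hsingle (i : ι) : (fun j => if i = j then (1 : ℝ) else 0) = Pi.single i 1 := by
    ext j; simp [Pi.single_apply, eq_comm]
  rw [← sub_eq_iff_eq_add, ← hlin, LinearMap.pi_apply_eq_sum_univ]
  simp only [hsingle, hlin, smul_eq_mul]

theorem IsLatticePt.exists_intCast {ι : Type} {x : ι → ℝ} (hx : IsLatticePt x) :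
    ∃ ξ : ι → ℤ, x = fun i => (ξ i : ℝ) := by
  choose ξ hξ using hx
  exact ⟨ξ, funext hξ⟩

theorem isLatticePt_intCast {ι : Type} (ξ : ι → ℤ) : IsLatticePt fun i => (ξ i : ℝ) :=
  fun i => ⟨ξ i, rfl⟩

namespace SharpJump

variable {d : ℕ} (L : Fin d) (w : ℕ)

def intApex : Fin d → ℤ := fun i => if i = L then ((d : ℤ) - 2) * w + 1 else 1

def simplexGens : Set (Fin d → ℤ) :=
  {q | (∃ k ≠ L, q = Pi.single k 1) ∨ ∃ t : ℤ, 0 ≤ t ∧ t ≤ w ∧ q = Pi.single L (-t)}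

def JumpIneqs {R : Type*} [CommRing R] [LE R] (c : ℕ) (x : Fin d → R) : Prop :=
  (∀ k ≠ L, 0 ≤ x k) ∧
  w * (∑ i ∈ Finset.univ.erase L, x i - c) ≤ x L ∧
  (((d : R) - 2) * w + 1) * (∑ i ∈ Finset.univ.erase L, x i - c) ≤ ((d : R) - 2) * x L ∧
  ∀ k ≠ L, x L ≤ (((d : R) - 2) * w + 1) * x k

variable {L w}

theorem sum_erase_pi_single_of_ne {M : Type*} [AddCommMonoid M] {k : Fin d} (hk : k ≠ L) (a : M) :
    ∑ i ∈ Finset.univ.erase L, (Pi.single k a : Fin d → M) i = a := by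
  simp [Finset.sum_pi_single', hk]

theorem eq_zero_of_sum_erase_eq_zero {x : Fin d → ℤ} (hA : ∀ k ≠ L, 0 ≤ x k)
    (hs : ∑ i ∈ Finset.univ.erase L, x i = 0) {k : Fin d} (hk : k ≠ L) : x k = 0 :=
  (Finset.sum_eq_zero_iff_of_nonneg fun i hi => hA i (Finset.ne_of_mem_erase hi)).1 hs k
    (Finset.mem_erase.2 ⟨hk, Finset.mem_univ k⟩)

theorem mem_nsmul_simplexGens (hw : 1 ≤ w) (c : ℕ) (x : Fin d → ℤ) (hA : ∀ k ≠ L, 0 ≤ x k)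
    (hL : x L ≤ 0) (hB : w * (∑ i ∈ Finset.univ.erase L, x i - c) ≤ x L) :
    x ∈ c • simplexGens L w := by
  induction c generalizing x with
  | zero =>
    have hs : 0 ≤ ∑ i ∈ Finset.univ.erase L, x i :=
      Finset.sum_nonneg fun i hi => hA i (Finset.ne_of_mem_erase hi)
    have hs0 : ∑ i ∈ Finset.univ.erase L, x i = 0 := by push_cast at hB; nlinarith
    have hL0 : x L = 0 := by rw [hs0] at hB; push_cast at hB; omega
    rw [zero_nsmul, Set.mem_zero]
    ext k
    by_cases hk : k = L
    · simpa [hk] using hL0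
    · simpa using eq_zero_of_sum_erase_eq_zero hA hs0 hk
  | succ c ih =>
    by_cases hk : ∃ k ≠ L, 1 ≤ x k
    · obtain ⟨k, hkL, hk1⟩ := hk
      refine mem_succ_nsmul_of_sub_mem (Or.inl ⟨k, hkL, rfl⟩) (ih _ ?_ ?_ ?_)
      · intro i hi
        by_cases hik : i = k
        · subst hik; simpa using hk1
        · simpa [hik] using hA i hi
      · simpa [hkL.symm] using hL
      · simp only [Pi.sub_apply, Finset.sum_sub_distrib, sum_erase_pi_single_of_ne hkL (1 : ℤ),
          Pi.single_eq_of_ne' hkL, sub_zero]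
        push_cast at hB; linarith
    · simp only [not_exists, not_and, not_le] at hk
      have hs0 : ∑ i ∈ Finset.univ.erase L, x i = 0 :=
        Finset.sum_eq_zero fun i hi => by
          have := hk i (Finset.ne_of_mem_erase hi); have := hA i (Finset.ne_of_mem_erase hi); omega
      obtain ⟨t, ht0, htw, htx, ht⟩ : ∃ t : ℤ, 0 ≤ t ∧ t ≤ w ∧ t ≤ -x L ∧ (t = w ∨ t = -x L) :=
        ⟨min (w : ℤ) (-x L), by omega, by omega, by omega, by omega⟩
      refine mem_succ_nsmul_of_sub_mem (Or.inr ⟨t, ht0, htw, rfl⟩) (ih _ ?_ ?_ ?_)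
      · intro i hi; simpa [hi] using hA i hi
      · simp only [Pi.sub_apply, Pi.single_eq_same]; omega
      · simp only [Pi.sub_apply, Finset.sum_sub_distrib, hs0, Pi.single_eq_same,
          Finset.sum_pi_single', Finset.notMem_erase, if_false]
        rw [hs0] at hB; push_cast at hB
        rcases ht with rfl | rfl <;> nlinarith

theorem card_erase_univ_fin {R : Type*} [AddGroupWithOne R] (L : Fin d) :
    ((Finset.univ.erase L).card : R) = d - 1 := by
  rw [Finset.card_erase_of_mem (Finset.mem_univ L), Finset.card_univ, Fintype.card_fin,
    Nat.cast_sub (Fin.pos L), Nat.cast_one]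

theorem sum_erase_intApex : ∑ i ∈ Finset.univ.erase L, intApex L w i = d - 1 := by
  have h : ∀ i ∈ Finset.univ.erase L, intApex L w i = 1 :=
    fun i hi => if_neg (Finset.ne_of_mem_erase hi)
  rw [Finset.sum_congr rfl h, Finset.sum_const, nsmul_one, card_erase_univ_fin]

theorem JumpIneqs.le_mul {c : ℕ} {x : Fin d → ℤ} (h : JumpIneqs L w c x) :
    x L ≤ (((d : ℤ) - 2) * w + 1) * c := by
  obtain ⟨-, -, hC, hD⟩ := h
  have hsum := Finset.sum_le_sum (s := Finset.univ.erase L)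
    fun i hi => hD i (Finset.ne_of_mem_erase hi)
  rw [Finset.sum_const, ← Finset.mul_sum, nsmul_eq_mul, card_erase_univ_fin] at hsum
  linarith

theorem JumpIneqs.sub_intApex (hd : 2 ≤ d) {c : ℕ} {x : Fin d → ℤ}
    (h : JumpIneqs L w (c + 1) x) (hx : 1 ≤ x L) : JumpIneqs L w c (x - intApex L w) := by
  obtain ⟨hA, hB, hC, hD⟩ := h
  have hd2 : (0 : ℤ) ≤ d - 2 := by omega
  have hW : (1 : ℤ) ≤ (d - 2) * w + 1 := by nlinarith
  have hapex : ∀ k ≠ L, intApex L w k = 1 := fun k hk => if_neg hk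
  have hapexL : intApex L w L = (d - 2) * w + 1 := if_pos rfl
  simp only [Nat.cast_succ] at hB hC
  refine ⟨fun k hk => ?_, ?_, ?_, fun k hk => ?_⟩
  · have := hD k hk
    simp only [Pi.sub_apply, hapex k hk, sub_nonneg]
    nlinarith
  · simp only [Pi.sub_apply, Finset.sum_sub_distrib, sum_erase_intApex, hapexL]
    -- `B` holds strictly at `x`: when `s > c + 1` this is forced by `C`
    have : (w : ℤ) * (∑ i ∈ Finset.univ.erase L, x i - (c + 1)) < x L := by
      rcases le_or_gt (∑ i ∈ Finset.univ.erase L, x i) (c + 1) with hs | hs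
      · nlinarith
      · by_contra hcon
        nlinarith
    nlinarith
  · simp only [Pi.sub_apply, Finset.sum_sub_distrib, sum_erase_intApex, hapexL]
    nlinarith
  · simp only [Pi.sub_apply, hapex k hk, hapexL]
    nlinarith [hD k hk]

theorem JumpIneqs.mem_nsmul (hd : 2 ≤ d) (hw : 1 ≤ w) {c : ℕ} {x : Fin d → ℤ}
    (h : JumpIneqs L w c x) : x ∈ c • insert (intApex L w) (simplexGens L w) := by
  induction c generalizing x with
  | zero =>
    exact nsmul_subset_nsmul_left (subset_insert _ _)
      (mem_nsmul_simplexGens hw 0 x h.1 (by simpa using h.le_mul) h.2.1)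
  | succ c ih =>
    by_cases hL : x L ≤ 0
    · exact nsmul_subset_nsmul_left (subset_insert _ _)
        (mem_nsmul_simplexGens hw _ x h.1 hL h.2.1)
    · exact mem_succ_nsmul_of_sub_mem (mem_insert _ _) (ih (h.sub_intApex hd (by omega)))

variable (L w)

-- The origin is `vertex L w (some L)`, so the `d + 1` vertices are indexed by `Option (Fin d)`.
def vertex : Option (Fin d) → Fin d → ℝ
  | none => Pi.single L (-(w : ℝ))
  | some i => if i = L then 0 else Pi.single i 1

def simplex : Set (Fin d → ℝ) := convexHull ℝ (range (vertex L w))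

def apex : Fin d → ℝ := fun i => if i = L then ((d : ℝ) - 2) * w + 1 else 1

def jump : Set (Fin d → ℝ) := convexHull ℝ (insert (apex L w) (simplex L w))

def offSum : (Fin d → ℝ) →ₗ[ℝ] ℝ := ∑ i ∈ Finset.univ.erase L, LinearMap.proj i

variable {L w}

@[simp]
theorem offSum_apply (x : Fin d → ℝ) : offSum L x = ∑ i ∈ Finset.univ.erase L, x i := by
  simp [offSum]

theorem range_vertex : range (vertex L w) = insert (fun j => if j = L then -(w : ℝ) else 0)
    (insert 0 {x | ∃ i, i ≠ L ∧ x = fun j => if j = i then (1 : ℝ) else 0}) := by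
  ext x
  constructor
  · rintro ⟨_ | i, rfl⟩
    · left; ext j; simp [vertex, Pi.single_apply]
    · by_cases hi : i = L
      · right; left; simp [vertex, hi]
      · right; right; exact ⟨i, hi, by ext j; simp [vertex, hi, Pi.single_apply]⟩
  · rintro (rfl | rfl | ⟨i, hi, rfl⟩)
    · exact ⟨none, by ext j; simp [vertex, Pi.single_apply]⟩
    · exact ⟨some L, by simp [vertex]⟩
    · exact ⟨some i, by ext j; simp [vertex, hi, Pi.single_apply]⟩

theorem le_mul_of_mem_smul_jump (ℓ : (Fin d → ℝ) →ₗ[ℝ] ℝ) {b : ℝ} (h0 : 0 ≤ b)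
    (hv : ℓ (Pi.single L (-(w : ℝ))) ≤ b) (he : ∀ k ≠ L, ℓ (Pi.single k 1) ≤ b)
    (hapex : ℓ (apex L w) ≤ b) {c : ℕ} {x : Fin d → ℝ} (hx : x ∈ (c : ℝ) • jump L w) :
    ℓ x ≤ c * b := by
  rw [jump, simplex, insert_eq, convexHull_convexHull_union_right, ← insert_eq] at hx
  refine apply_le_mul_of_mem_smul_convexHull ℓ ?_ c.cast_nonneg hx
  simp only [forall_mem_insert, forall_mem_range, Option.forall]
  refine ⟨hapex, hv, fun i => ?_⟩
  by_cases hi : i = L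
  · simpa [vertex, hi] using h0
  · simpa [vertex, hi] using he i hi

theorem apex_eq_intCast : apex L w = fun i => (intApex L w i : ℝ) := by
  ext i; by_cases hi : i = L <;> simp [apex, intApex, hi]

theorem offSum_apex : offSum L (apex L w) = d - 1 := by
  rw [offSum_apply, apex_eq_intCast, ← Int.cast_sum, sum_erase_intApex]; push_cast; ring

theorem sub_two_nonneg_of_two_le (hd : 2 ≤ d) : (0 : ℝ) ≤ d - 2 :=
  sub_nonneg.2 (by exact_mod_cast hd)

theorem coord_bounds_of_mem_smul_jump (hd : 2 ≤ d) {c : ℕ} {x : Fin d → ℝ}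
    (hx : x ∈ (c : ℝ) • jump L w) :
    (∀ k ≠ L, 0 ≤ x k) ∧ ∀ k ≠ L, x L ≤ (((d : ℝ) - 2) * w + 1) * x k := by
  have hW : (0 : ℝ) ≤ (d - 2) * w + 1 := by have := sub_two_nonneg_of_two_le hd; positivity
  refine ⟨fun k hk => ?_, fun k hk => ?_⟩
  · have := le_mul_of_mem_smul_jump (-LinearMap.proj k) le_rfl ?_ ?_ ?_ hx
    · simpa using this
    · simp [hk]
    · intro i hi
      simp only [LinearMap.neg_apply, LinearMap.proj_apply, neg_nonpos, Pi.single_apply]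
      split_ifs <;> norm_num
    · simp [apex, hk]
  · have := le_mul_of_mem_smul_jump
      (LinearMap.proj L - (((d : ℝ) - 2) * w + 1) • LinearMap.proj k) le_rfl ?_ ?_ ?_ hx
    · simp only [LinearMap.sub_apply, LinearMap.smul_apply, LinearMap.proj_apply, smul_eq_mul,
        mul_zero] at this
      linarith
    · simp [hk]
    · intro i hi
      simp only [LinearMap.sub_apply, LinearMap.smul_apply, LinearMap.proj_apply, smul_eq_mul,
        Pi.single_apply, if_neg hi.symm]
      split_ifs <;> nlinarith
    · simp [apex, hk]

theorem offSum_bounds_of_mem_smul_jump (hd : 2 ≤ d) {c : ℕ} {x : Fin d → ℝ}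
    (hx : x ∈ (c : ℝ) • jump L w) :
    w * (∑ i ∈ Finset.univ.erase L, x i - c) ≤ x L ∧
      (((d : ℝ) - 2) * w + 1) * (∑ i ∈ Finset.univ.erase L, x i - c) ≤ ((d : ℝ) - 2) * x L := by
  have hd2 := sub_two_nonneg_of_two_le hd
  have hW : (0 : ℝ) ≤ (d - 2) * w + 1 := by positivity
  have hapexL : apex L w L = (d - 2) * w + 1 := if_pos rfl
  constructor
  · have := le_mul_of_mem_smul_jump ((w : ℝ) • offSum L - LinearMap.proj L)
      (Nat.cast_nonneg w) ?_ ?_ ?_ hx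
    · simp only [LinearMap.sub_apply, LinearMap.smul_apply, offSum_apply, LinearMap.proj_apply,
        smul_eq_mul] at this
      linarith
    · simp [Finset.sum_pi_single']
    · intro k hk; simp [hk]
    · rw [LinearMap.sub_apply, LinearMap.smul_apply, offSum_apex, LinearMap.proj_apply, hapexL,
        smul_eq_mul]
      nlinarith
  · have := le_mul_of_mem_smul_jump
      ((((d : ℝ) - 2) * w + 1) • offSum L - ((d : ℝ) - 2) • LinearMap.proj L) hW ?_ ?_ ?_ hx
    · simp only [LinearMap.sub_apply, LinearMap.smul_apply, offSum_apply, LinearMap.proj_apply,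
        smul_eq_mul] at this
      linarith
    · simp [Finset.sum_pi_single']
    · intro k hk; simp [hk]
    · rw [LinearMap.sub_apply, LinearMap.smul_apply, LinearMap.smul_apply, offSum_apex,
        LinearMap.proj_apply, hapexL, smul_eq_mul, smul_eq_mul]
      nlinarith

theorem jumpIneqs_of_mem_smul (hd : 2 ≤ d) {c : ℕ} {x : Fin d → ℝ}
    (hx : x ∈ (c : ℝ) • jump L w) : JumpIneqs L w c x :=
  have hcoord := coord_bounds_of_mem_smul_jump hd hx
  have hsum := offSum_bounds_of_mem_smul_jump hd hx
  ⟨hcoord.1, hsum.1, hsum.2, hcoord.2⟩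

theorem JumpIneqs.of_intCast {c : ℕ} {ξ : Fin d → ℤ}
    (h : JumpIneqs L w c fun i => (ξ i : ℝ)) : JumpIneqs L w c ξ := by
  obtain ⟨hA, hB, hC, hD⟩ := h
  dsimp only at hA hB hC hD
  refine ⟨fun k hk => by exact_mod_cast hA k hk, ?_, ?_, fun k hk => ?_⟩
  · exact_mod_cast hB
  · exact_mod_cast hC
  · exact_mod_cast hD k hk

theorem intCast_mem_simplex (hw : 1 ≤ w) {q : Fin d → ℤ} (hq : q ∈ simplexGens L w) :
    (fun i => (q i : ℝ)) ∈ simplex L w := by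
  have hmem : ∀ o, vertex L w o ∈ simplex L w := fun o => subset_convexHull ℝ _ (mem_range_self o)
  rcases hq with ⟨k, hk, rfl⟩ | ⟨t, ht0, htw, rfl⟩
  · convert hmem (some k) using 1
    ext j; simp [vertex, hk, Pi.single_apply]
  · have hw0 : (0 : ℝ) < w := by exact_mod_cast hw
    have ht : (t : ℝ) / w ∈ Icc (0 : ℝ) 1 :=
      ⟨by positivity, (div_le_one hw0).2 (by exact_mod_cast htw)⟩
    have hconv : Convex ℝ (simplex L w) := convex_convexHull ℝ _
    convert hconv.smul_mem_of_zero_mem (by simpa [vertex] using hmem (some L)) (hmem none) ht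
      using 1
    ext j
    by_cases hj : j = L
    · subst hj; simp [vertex]; field_simp
    · simp [vertex, hj]

theorem simplex_subset_jump : simplex L w ⊆ jump L w :=
  (subset_insert _ _).trans (subset_convexHull ℝ _)

theorem apex_mem_jump : apex L w ∈ jump L w :=
  subset_convexHull ℝ _ (mem_insert _ _)

theorem intCast_mem_jump (hw : 1 ≤ w) {q : Fin d → ℤ}
    (hq : q ∈ insert (intApex L w) (simplexGens L w)) :
    (fun i => (q i : ℝ)) ∈ {x ∈ jump L w | IsLatticePt x} := by
  refine ⟨?_, isLatticePt_intCast q⟩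
  rcases hq with rfl | hq
  · exact apex_eq_intCast (L := L) (w := w) ▸ apex_mem_jump
  · exact simplex_subset_jump (intCast_mem_simplex hw hq)

theorem mem_nsmul_of_mem_smul_jump (hd : 2 ≤ d) (hw : 1 ≤ w) {c : ℕ} {ξ : Fin d → ℤ}
    (hξ : (fun i => (ξ i : ℝ)) ∈ (c : ℝ) • jump L w) :
    ξ ∈ c • insert (intApex L w) (simplexGens L w) :=
  (jumpIneqs_of_mem_smul hd hξ).of_intCast.mem_nsmul hd hw

theorem latticePts_jump (hd : 2 ≤ d) (hw : 1 ≤ w) :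
    {x ∈ jump L w | IsLatticePt x} = {x ∈ simplex L w | IsLatticePt x} ∪ {apex L w} := by
  ext x
  constructor
  · rintro ⟨hx, hlat⟩
    obtain ⟨ξ, rfl⟩ := hlat.exists_intCast
    have hξ := mem_nsmul_of_mem_smul_jump hd hw (c := 1) (by simpa using hx)
    rw [one_nsmul] at hξ
    rcases hξ with rfl | hq
    · exact Or.inr apex_eq_intCast.symm
    · exact Or.inl ⟨intCast_mem_simplex hw hq, isLatticePt_intCast ξ⟩
  · rintro (⟨hx, hlat⟩ | rfl)
    · exact ⟨simplex_subset_jump hx, hlat⟩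
    · exact ⟨apex_mem_jump, apex_eq_intCast (L := L) (w := w) ▸ isLatticePt_intCast _⟩

theorem isNormal_jump (hd : 2 ≤ d) (hw : 1 ≤ w) : IsNormal (jump L w) := by
  intro c _ x hx hlat
  obtain ⟨ξ, rfl⟩ := hlat.exists_intCast
  have hξ := Set.mem_image_of_mem ((Int.castAddHom ℝ).compLeft (Fin d))
    (mem_nsmul_of_mem_smul_jump hd hw hx)
  rw [Set.image_nsmul] at hξ
  have hsub : (Int.castAddHom ℝ).compLeft (Fin d) '' insert (intApex L w) (simplexGens L w) ⊆
      {x ∈ jump L w | IsLatticePt x} := by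
    rintro _ ⟨q, hq, rfl⟩
    exact intCast_mem_jump hw hq
  exact exists_fin_sum_of_mem_nsmul (nsmul_subset_nsmul_left hsub hξ)

theorem sSup_neg_apply_simplex : sSup ((fun x => -(x L)) '' simplex L w) = w := by
  refine IsGreatest.csSup_eq ⟨⟨vertex L w none, subset_convexHull ℝ _ (mem_range_self _),
    by simp [vertex]⟩, ?_⟩
  rintro _ ⟨x, hx, rfl⟩
  refine apply_le_of_mem_convexHull (-LinearMap.proj L) ?_ hx
  simp only [forall_mem_range, Option.forall]
  refine ⟨by simp [vertex], fun i => ?_⟩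
  by_cases hi : i = L <;> simp [vertex, hi]

theorem subsingleton_setOf_pos_vertex (hd : 2 ≤ d) (g : (Fin d → ℝ) →ᵃ[ℝ] ℝ)
    (hgP : ∀ x ∈ simplex L w, 0 ≤ g x)
    (hfacet : Module.finrank ℝ (affineSpan ℝ {x ∈ simplex L w | g x = 0}).direction = d - 1) :
    {o | 0 < g (vertex L w o)}.Subsingleton := by
  classical
  intro o ho o' ho'
  by_contra hne
  have hle := finrank_direction_affineSpan_setOf_eq_zero_le (vertex L w) g
    fun o => hgP _ (subset_convexHull ℝ _ (mem_range_self o))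
  have hsub : (Finset.univ.filter fun o => g (vertex L w o) = 0) ⊆
      (Finset.univ.erase o).erase o' := by
    intro o'' h
    simp only [Finset.mem_filter, Finset.mem_univ, true_and] at h
    simp only [Finset.mem_erase, Finset.mem_univ, and_true]
    exact ⟨fun h' => by subst h'; exact ho'.ne' h, fun h' => by subst h'; exact ho.ne' h⟩
  have hcard := Finset.card_le_card hsub
  rw [Finset.card_erase_of_mem (Finset.mem_erase.2 ⟨Ne.symm hne, Finset.mem_univ _⟩),
    Finset.card_erase_of_mem (Finset.mem_univ _), Finset.card_univ, Fintype.card_option,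
    Fintype.card_fin] at hcard
  rw [← simplex, hfacet] at hle
  omega

theorem apex_affine_relation (g : (Fin d → ℝ) →ᵃ[ℝ] ℝ) :
    w * g (apex L w) + (((d : ℝ) - 2) * w + 1) * g (Pi.single L (-(w : ℝ))) =
      w * ∑ k ∈ Finset.univ.erase L, g (Pi.single k 1) + g 0 := by
  set a : Fin d → ℝ := fun i => g (Pi.single i 1) - g 0
  have hv : g (Pi.single L (-(w : ℝ))) = -w * a L + g 0 := by
    rw [g.apply_eq_sum_mul_sub_add]
    simp [Pi.single_apply, a]
  have hz : g (apex L w) = (((d : ℝ) - 2) * w + 1) * a L +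
      ∑ k ∈ Finset.univ.erase L, a k + g 0 := by
    rw [g.apply_eq_sum_mul_sub_add, ← Finset.add_sum_erase _ _ (Finset.mem_univ L)]
    congr 2
    · simp [apex, a]
    · exact Finset.sum_congr rfl fun k hk => by simp [apex, Finset.ne_of_mem_erase hk, a]
  have he : ∑ k ∈ Finset.univ.erase L, g (Pi.single k 1) =
      ∑ k ∈ Finset.univ.erase L, a k + (d - 1) * g 0 := by
    simp only [a, Finset.sum_sub_distrib, Finset.sum_const, nsmul_eq_mul, card_erase_univ_fin]
    ring
  rw [hv, hz, he]
  ring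

theorem eq_neg_apply_of_isFacet_of_visible (hd : 2 ≤ d) (hw : 1 ≤ w)
    (g : (Fin d → ℝ) →ᵃ[ℝ] ℝ) (hgP : ∀ x ∈ simplex L w, 0 ≤ g x)
    (hgint : ∀ x : Fin d → ℝ, IsLatticePt x → ∃ m : ℤ, g x = m)
    (hgsurj : ∀ m : ℤ, ∃ x : Fin d → ℝ, IsLatticePt x ∧ g x = m)
    (hfacet : Module.finrank ℝ (affineSpan ℝ {x ∈ simplex L w | g x = 0}).direction = d - 1)
    (hz : g (apex L w) < 0) (x : Fin d → ℝ) : g x = -(x L) := by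
  have hW : (0 : ℝ) < ((d : ℝ) - 2) * w + 1 := by
    have := sub_two_nonneg_of_two_le hd
    positivity
  have hv : ∀ o, 0 ≤ g (vertex L w o) := fun o => hgP _ (subset_convexHull ℝ _ (mem_range_self o))
  have hnone : 0 < g (vertex L w none) := by
    have hsum : 0 ≤ ∑ k ∈ Finset.univ.erase L, g (Pi.single k 1) :=
      Finset.sum_nonneg fun k hk => by simpa [vertex, Finset.ne_of_mem_erase hk] using hv (some k)
    have h0 : 0 ≤ g 0 := by simpa [vertex] using hv (some L)
    have hw0 : (0 : ℝ) < w := by exact_mod_cast hw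
    have := apex_affine_relation (L := L) (w := w) g
    simp only [vertex]
    nlinarith
  have hsome : ∀ i, g (vertex L w (some i)) = 0 := fun i => ((hv _).eq_or_lt.resolve_right
    fun h => Option.some_ne_none i (subsingleton_setOf_pos_vertex hd g hgP hfacet h hnone)).symm
  have hform : ∀ x : Fin d → ℝ, g x = x L * g (Pi.single L 1) := by
    have hg0 : g 0 = 0 := by simpa [vertex] using hsome L
    intro x
    rw [g.apply_eq_sum_mul_sub_add, hg0, Finset.sum_eq_single L]
    · simp
    · intro k _ hk
      simp [show g (Pi.single k 1) = 0 by simpa [vertex, hk] using hsome k]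
    · simp
  obtain ⟨m, hm⟩ := hgint (Pi.single L 1) fun i => by
    by_cases hi : i = L
    · exact ⟨1, by simp [hi]⟩
    · exact ⟨0, by simp [hi]⟩
  obtain ⟨y, hy, hy1⟩ := hgsurj 1
  obtain ⟨n, hn⟩ := hy L
  have hmn : m * n = 1 := by
    rw [hform, hn, hm, mul_comm] at hy1
    exact_mod_cast hy1
  have hm1 : m = -1 := by
    refine (Int.eq_one_or_neg_one_of_mul_eq_one hmn).resolve_left fun h1 => ?_
    rw [hform, hm, h1] at hz
    simp [apex] at hz
    linarith
  rw [hform, hm, hm1]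
  simp

end SharpJump

open SharpJump

/-- Sharpness of the height bound: for `P = conv(0, e₁, …, e_{d-1}, -w·e_d)` and
`z = e₁ + ⋯ + e_{d-1} + ((d-2)w+1)·e_d`, the pair `(P, conv(P,z))` is a quantum jump,
the horizontal facet `F` (with height function `x ↦ -x_d`) has `width_F P = w`, it is the
only facet of `P` visible from `z`, and `ht_P(z) = (d-2)w + 1`. -/
theorem stmt_17 (d : ℕ) (hd : 2 ≤ d) (L : Fin d) (w : ℕ) (hw : 1 ≤ w)
    (P : Set (Fin d → ℝ))
    (hP : P = convexHull ℝ
      (insert (fun j => if j = L then -(w : ℝ) else 0)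
        (insert 0 {x : Fin d → ℝ | ∃ i : Fin d, i ≠ L ∧
          x = fun j => if j = i then (1 : ℝ) else 0})))
    (zpt : Fin d → ℝ)
    (hz : zpt = fun i => if i = L then ((d : ℝ) - 2) * w + 1 else 1)
    (Q : Set (Fin d → ℝ)) (hQ : Q = convexHull ℝ (insert zpt P)) :
    -- (P, Q) is a quantum jump:
    {x ∈ Q | IsLatticePt x} = {x ∈ P | IsLatticePt x} ∪ {zpt} ∧
    IsNormal Q ∧
    -- width of P over the horizontal facet F is w:
    sSup ((fun x => -(x L)) '' P) = (w : ℝ) ∧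
    -- F is the only facet of P visible from z, and ht_P(z) = (d-2)w + 1:
    (∀ g : (Fin d → ℝ) →ᵃ[ℝ] ℝ,
      (∀ x ∈ P, 0 ≤ g x) →
      (∀ x : Fin d → ℝ, IsLatticePt x → ∃ m : ℤ, g x = m) →
      (∀ m : ℤ, ∃ x : Fin d → ℝ, IsLatticePt x ∧ g x = m) →
      Module.finrank ℝ (affineSpan ℝ {x ∈ P | g x = 0}).direction = d - 1 →
      g zpt < 0 →
      (∀ x, g x = -(x L)) ∧ -(g zpt) = ((d : ℝ) - 2) * w + 1) := by
  subst hz hQ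
  rw [← range_vertex, ← simplex] at hP
  subst hP
  refine ⟨latticePts_jump hd hw, isNormal_jump hd hw, sSup_neg_apply_simplex,
    fun g hgP hgint hgsurj hfacet hz => ?_⟩
  have hg := eq_neg_apply_of_isFacet_of_visible hd hw g hgP hgint hgsurj hfacet hz
  refine ⟨hg, ?_⟩
  rw [hg]
  simp
end

section
/- For every natural number $k$, the tetrahedron $\Delta_k = \operatorname{conv}(0, k\mathbf{e}_1, (k+1)\mathbf{e}_2, (k^2+k+1)\mathbf{e}_3) \subset \mathbb{R}^3$ has the property that for $j = 1, \dots, k-1$, the affine lattice $(k+j, -j, -j) + \mathbb{Z}(-k, k+1, 0) + \mathbb{Z}(-k, 0, k^2+k+1)$ contains no point with all three coordinates nonnegative. Consequently, every lattice point $z \in \mathbb{Z}_+^3 \setminus \Delta_k$ satisfies $-\operatorname{ht}_{F_k}(z) \ge k$, where $F_k$ is the facet of $\Delta_k$ opposite to $0$. -/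
open Set

private lemma part1 (k : ℕ) (hk : 1 ≤ k) :
    ∀ j : ℕ, 1 ≤ j → j ≤ k - 1 → ∀ a b : ℤ,
      ¬(0 ≤ (k : ℤ) + j - a * k - b * k ∧
        0 ≤ -(j : ℤ) + a * (k + 1) ∧
        0 ≤ -(j : ℤ) + b * (k ^ 2 + k + 1)) := by
  intro j hj1 hjk a b ⟨h1, h2, h3⟩
  have hk' : (1 : ℤ) ≤ (k : ℤ) := by exact_mod_cast hk
  have hj1' : (1 : ℤ) ≤ (j : ℤ) := by exact_mod_cast hj1
  have hjk' : (j : ℤ) ≤ (k : ℤ) - 1 := by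
    have : j + 1 ≤ k := by omega
    have := (Nat.cast_le (α := ℤ)).2 this
    push_cast at this; omega
  have ha : 1 ≤ a := by nlinarith
  have hb : 1 ≤ b := by nlinarith
  nlinarith [mul_le_mul_of_nonneg_right ha (by linarith : (0:ℤ) ≤ (k:ℤ)),
    mul_le_mul_of_nonneg_right hb (by linarith : (0:ℤ) ≤ (k:ℤ))]

private lemma part2mem (k : ℕ) (hk : 1 ≤ k) (z : Fin 3 → ℤ) (hz : ∀ i, 0 ≤ z i)
    (hle : ((k:ℤ) + 1) * (k ^ 2 + k + 1) * z 0 + k * (k ^ 2 + k + 1) * z 1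
        + k * (k + 1) * z 2 ≤ k * (k + 1) * (k ^ 2 + k + 1)) :
    (fun i => ((z i : ℝ))) ∈ convexHull ℝ
      {(0 : Fin 3 → ℝ), ![(k : ℝ), 0, 0], ![0, (k : ℝ) + 1, 0],
        ![0, 0, (k : ℝ) ^ 2 + k + 1]} := by
  have hK : (1 : ℝ) ≤ (k : ℝ) := by exact_mod_cast hk
  have hK0 : (0 : ℝ) < (k : ℝ) := by linarith
  have hK1 : (0 : ℝ) < (k : ℝ) + 1 := by linarith
  have hK2 : (0 : ℝ) < (k : ℝ) ^ 2 + k + 1 := by positivity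
  have hz0 : (0 : ℝ) ≤ (z 0 : ℝ) := by exact_mod_cast hz 0
  have hz1 : (0 : ℝ) ≤ (z 1 : ℝ) := by exact_mod_cast hz 1
  have hz2 : (0 : ℝ) ≤ (z 2 : ℝ) := by exact_mod_cast hz 2
  have hleR : ((k:ℝ) + 1) * ((k:ℝ) ^ 2 + k + 1) * (z 0 : ℝ)
      + (k:ℝ) * ((k:ℝ) ^ 2 + k + 1) * (z 1 : ℝ) + (k:ℝ) * ((k:ℝ) + 1) * (z 2 : ℝ)
      ≤ (k:ℝ) * ((k:ℝ) + 1) * ((k:ℝ) ^ 2 + k + 1) := by exact_mod_cast hle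
  set p : Fin 4 → (Fin 3 → ℝ) :=
    ![(0 : Fin 3 → ℝ), ![(k : ℝ), 0, 0], ![0, (k : ℝ) + 1, 0], ![0, 0, (k : ℝ) ^ 2 + k + 1]]
  set w : Fin 4 → ℝ :=
    ![1 - (z 0 : ℝ) / k - (z 1 : ℝ) / (k + 1) - (z 2 : ℝ) / ((k:ℝ) ^ 2 + k + 1),
      (z 0 : ℝ) / k, (z 1 : ℝ) / (k + 1), (z 2 : ℝ) / ((k:ℝ) ^ 2 + k + 1)]
  have hw0 : 0 ≤ w 0 := by
    have : w 0 = ((k:ℝ) * ((k:ℝ) + 1) * ((k:ℝ) ^ 2 + k + 1)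
        - (((k:ℝ) + 1) * ((k:ℝ) ^ 2 + k + 1) * (z 0 : ℝ)
          + (k:ℝ) * ((k:ℝ) ^ 2 + k + 1) * (z 1 : ℝ) + (k:ℝ) * ((k:ℝ) + 1) * (z 2 : ℝ)))
        / ((k:ℝ) * ((k:ℝ) + 1) * ((k:ℝ) ^ 2 + k + 1)) := by
      simp only [w, Matrix.cons_val_zero]
      field_simp
      ring
    rw [this]
    apply div_nonneg (by linarith) (by positivity)
  have hwnn : ∀ i ∈ Finset.univ, 0 ≤ w i := by
    intro i _
    fin_cases i
    · exact hw0
    · exact div_nonneg hz0 hK0.le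
    · exact div_nonneg hz1 hK1.le
    · exact div_nonneg hz2 hK2.le
  have hwsum : ∑ i, w i = 1 := by
    simp [Fin.sum_univ_four, w]
    ring
  have hmem : ∀ i ∈ Finset.univ, p i ∈
      ({(0 : Fin 3 → ℝ), ![(k : ℝ), 0, 0], ![0, (k : ℝ) + 1, 0],
        ![0, 0, (k : ℝ) ^ 2 + k + 1]} : Set (Fin 3 → ℝ)) := by
    intro i _
    fin_cases i <;> simp [p]
  have := Finset.centerMass_mem_convexHull Finset.univ hwnn (by rw [hwsum]; norm_num) hmem
  have heq : Finset.univ.centerMass w p = fun i => ((z i : ℝ)) := by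
    rw [Finset.centerMass_eq_of_sum_1 _ _ hwsum]
    funext i
    rw [Fin.sum_univ_four]
    fin_cases i <;>
      simp [p, w, Pi.add_apply, Pi.smul_apply, smul_eq_mul] <;>
      field_simp
  rwa [heq] at this

/-- Empty strata around the tetrahedron
`Δ_k = conv(0, k·e₁, (k+1)·e₂, (k²+k+1)·e₃)`: the affine lattices
`(k+j,-j,-j) + ℤ(-k,k+1,0) + ℤ(-k,0,k²+k+1)`, `j = 1, …, k-1`, contain no point with
nonnegative coordinates; consequently every lattice point `z ≥ 0` outside `Δ_k` satisfies
`-ht_{F_k}(z) ≥ k` for the facet `F_k` opposite to `0`. -/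
theorem stmt_18 (k : ℕ) (hk : 1 ≤ k) :
    (∀ j : ℕ, 1 ≤ j → j ≤ k - 1 → ∀ a b : ℤ,
      ¬(0 ≤ (k : ℤ) + j - a * k - b * k ∧
        0 ≤ -(j : ℤ) + a * (k + 1) ∧
        0 ≤ -(j : ℤ) + b * (k ^ 2 + k + 1))) ∧
    (∀ z : Fin 3 → ℤ, (∀ i, 0 ≤ z i) →
      (fun i => ((z i : ℝ))) ∉ convexHull ℝ
        {(0 : Fin 3 → ℝ), ![(k : ℝ), 0, 0], ![0, (k : ℝ) + 1, 0],
          ![0, 0, (k : ℝ) ^ 2 + k + 1]} →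
      -((k : ℤ) + 1) * (k ^ 2 + k + 1) * z 0 - k * (k ^ 2 + k + 1) * z 1
          - k * (k + 1) * z 2 + k * (k + 1) * (k ^ 2 + k + 1) ≤ -(k : ℤ)) := by
  refine ⟨part1 k hk, ?_⟩
  intro z hz hnot
  by_contra h
  push_neg at h
  set g : ℤ := ((k:ℤ) + 1) * (k ^ 2 + k + 1) * z 0 + k * (k ^ 2 + k + 1) * z 1
      + k * (k + 1) * z 2 - k * (k + 1) * (k ^ 2 + k + 1) with hg
  have hgk : g < k := by rw [hg]; linarith
  have hg1 : 1 ≤ g := by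
    by_contra hle
    push_neg at hle
    exact hnot (part2mem k hk z hz (by rw [hg] at hle; linarith))
  set j : ℕ := g.toNat with hj
  have hjg : (j : ℤ) = g := Int.toNat_of_nonneg (by omega)
  have hk' : (1:ℤ) ≤ (k:ℤ) := by exact_mod_cast hk
  have hgk' : g ≤ (k:ℤ) - 1 := by omega
  have hj1 : 1 ≤ j := by omega
  have hjk : j ≤ k - 1 := by
    have : (j:ℤ) ≤ (k:ℤ) - 1 := by omega
    omega
  refine part1 k hk j hj1 hjk
    ((k^2 + k + 1) * z 0 + (k^2 + 1) * z 1 + k * z 2 - k * (k^2 + k + 1))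
    ((k + 1) * z 0 + k * z 1 + z 2 - k * (k + 1)) ⟨?_, ?_, ?_⟩
  · rw [hjg]
    have : (k:ℤ) + g - ((k^2 + k + 1) * z 0 + (k^2 + 1) * z 1 + k * z 2
        - k * (k^2 + k + 1)) * k - ((k + 1) * z 0 + k * z 1 + z 2 - k * (k + 1)) * k
        = z 0 := by rw [hg]; ring
    rw [this]; exact hz 0
  · rw [hjg]
    have : -g + ((k^2 + k + 1) * z 0 + (k^2 + 1) * z 1 + k * z 2
        - k * (k^2 + k + 1)) * ((k:ℤ) + 1) = z 1 := by rw [hg]; ring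
    rw [this]; exact hz 1
  · rw [hjg]
    have : -g + (((k:ℤ) + 1) * z 0 + k * z 1 + z 2 - k * (k + 1)) * ((k:ℤ)^2 + k + 1)
        = z 2 := by rw [hg]; ring
    rw [this]; exact hz 2
end

section
/- Let $P \subset \mathbb{R}^2$ be the pentagon with vertices $(0,0), (0,1), (1,0), (5,1), (1,5)$. Then the vertex $(0,0)$ is dark: there is no lattice point $z \in \mathbb{Z}^2 \setminus P$ such that $(0,0)$ is visible from $z$ and $\operatorname{conv}(P, z)$ contains exactly one more lattice point than $P$ and is normal. Equivalently (using that in dimension 2 all lattice polygons are normal and all jumps have height 1): every lattice point $z \notin P$ at height 1 over $P$ (i.e., $\operatorname{ht}_F(z) = -1$ for all visible facets $F$) has the property that the vertex $(0,0)$ is not visible from $z$. -/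
open Set Pointwise

/-! If `(0,0)` is visible from the lattice point `z = (a,b) ∉ P`, then `a ≤ -1` or `b ≤ -1`:
otherwise the segment `[z, 0]` crosses the edge `x + y = 1` of `P` away from `0`. If `a ≤ -1` and
`b ≥ 3a + 2`, the triangle `conv(0, z, (1,5))` contains `(0,2)`, which violates the inequality
`4x - y ≥ -1` defining the edge of `P` through `(0,1)` and `(1,5)`; otherwise `b ≤ -1` and
`a ≥ 3b + 2`, and symmetrically `(2,0)` is gained. Either way `conv(P, z)` has at least two lattice
points outside `P`, so it is not a quantum jump over `P`. -/

theorem Convex.add_smul_mem_of_zero_mem {E : Type*} [AddCommGroup E] [Module ℝ E] {K : Set E}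
    (hK : Convex ℝ K) (h0 : (0 : E) ∈ K) {x y : E} (hx : x ∈ K) (hy : y ∈ K) {a b : ℝ}
    (ha : 0 ≤ a) (hb : 0 ≤ b) (hab : a + b ≤ 1) : a • x + b • y ∈ K := by
  have := hK.sum_mem (t := Finset.univ) (w := ![a, b, 1 - a - b]) (z := ![x, y, 0])
    (by simp [Fin.forall_fin_succ, ha, hb]; linarith) (by simp [Fin.sum_univ_three])
    (by simp [Fin.forall_fin_succ, hx, hy, h0])
  simpa [Fin.sum_univ_three] using this

theorem le_apply_of_mem_convexHull {E : Type*} [AddCommGroup E] [Module ℝ E] (f : E →ₗ[ℝ] ℝ)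
    {s : Set E} {c : ℝ} (hs : ∀ v ∈ s, c ≤ f v) {x : E} (hx : x ∈ convexHull ℝ s) : c ≤ f x :=
  convexHull_min hs (convex_halfSpace_ge f.isLinear c) hx

def pentagon : Set (Fin 2 → ℝ) := convexHull ℝ {![0, 0], ![0, 1], ![1, 0], ![5, 1], ![1, 5]}

theorem vertex_mem_pentagon {v : Fin 2 → ℝ}
    (hv : v ∈ ({![0, 0], ![0, 1], ![1, 0], ![5, 1], ![1, 5]} : Set (Fin 2 → ℝ))) :
    v ∈ pentagon :=
  subset_convexHull ℝ _ hv

theorem zero_mem_pentagon : (0 : Fin 2 → ℝ) ∈ pentagon :=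
  vertex_mem_pentagon (Or.inl (by ext i; fin_cases i <;> rfl))

theorem neg_one_le_four_mul_sub_of_mem_pentagon {x : Fin 2 → ℝ} (hx : x ∈ pentagon) {i j : Fin 2}
    (hij : i ≠ j) : -1 ≤ 4 * x i - x j := by
  have := le_apply_of_mem_convexHull (4 • LinearMap.proj i - LinearMap.proj j) (c := -1) ?_ hx
  · simpa using this
  · fin_cases i <;> fin_cases j <;> simp at hij ⊢ <;> norm_num

theorem mem_pentagon_of_coord_sum_eq_one {x : Fin 2 → ℝ} (h0 : 0 ≤ x 0) (h1 : 0 ≤ x 1)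
    (hs : x 0 + x 1 = 1) : x ∈ pentagon := by
  refine segment_subset_convexHull (x := ![1, 0]) (y := ![0, 1]) (by simp) (by simp)
    ⟨x 0, x 1, h0, h1, hs, ?_⟩
  ext i; fin_cases i <;> simp

theorem segment_inter_pentagon_ne_singleton {z : Fin 2 → ℝ} (h0 : 0 ≤ z 0) (h1 : 0 ≤ z 1)
    (hs : 1 ≤ z 0 + z 1) : segment ℝ z ![0, 0] ∩ pentagon ≠ {![0, 0]} := by
  intro h
  set t := (z 0 + z 1)⁻¹
  have hpos : 0 < z 0 + z 1 := by linarith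
  have ht : t * (z 0 + z 1) = 1 := inv_mul_cancel₀ hpos.ne'
  have hmem : t • z ∈ segment ℝ z ![0, 0] ∩ pentagon := by
    refine ⟨⟨t, 1 - t, by positivity, ?_, by ring, by ext i; fin_cases i <;> simp⟩, ?_⟩
    · linarith [inv_le_one_of_one_le₀ hs]
    · exact mem_pentagon_of_coord_sum_eq_one (by simp; positivity) (by simp; positivity)
        (by simp; linarith)
  rw [h, mem_singleton_iff] at hmem
  have hz : z = 0 := by
    have h00 : (![0, 0] : Fin 2 → ℝ) = 0 := by ext i; fin_cases i <;> rfl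
    rw [h00, smul_eq_zero] at hmem
    exact hmem.resolve_left (inv_ne_zero hpos.ne')
  norm_num [hz] at hs

theorem coord_le_neg_one_of_visible {z : Fin 2 → ℝ} (hz : IsLatticePt z) (hzP : z ∉ pentagon)
    (hvis : segment ℝ z ![0, 0] ∩ pentagon = {![0, 0]}) : z 0 ≤ -1 ∨ z 1 ≤ -1 := by
  obtain ⟨a, ha⟩ := hz 0
  obtain ⟨b, hb⟩ := hz 1
  by_contra! hab
  rw [ha, hb] at hab
  have ha0 : 0 ≤ a := by exact_mod_cast (by linarith : (-1 : ℝ) < a)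
  have hb0 : 0 ≤ b := by exact_mod_cast (by linarith : (-1 : ℝ) < b)
  have hz0 : z ≠ 0 := fun h ↦ hzP (h ▸ zero_mem_pentagon)
  have hsum : 1 ≤ a + b := by
    by_contra!
    refine hz0 (funext fun i ↦ ?_)
    fin_cases i <;> simp [ha, hb] <;> omega
  exact segment_inter_pentagon_ne_singleton (by rw [ha]; exact_mod_cast ha0)
    (by rw [hb]; exact_mod_cast hb0) (by rw [ha, hb]; exact_mod_cast hsum) hvis

theorem exists_mem_pentagon_apply_eq_one_five {i j : Fin 2} (hij : i ≠ j) :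
    ∃ v ∈ pentagon, v i = 1 ∧ v j = 5 := by
  fin_cases i <;> fin_cases j
  · exact absurd rfl hij
  · exact ⟨![1, 5], vertex_mem_pentagon (by simp), rfl, rfl⟩
  · exact ⟨![5, 1], vertex_mem_pentagon (by simp), rfl, rfl⟩
  · exact absurd rfl hij

theorem mem_convexHull_insert_pentagon_of_apply {z w : Fin 2 → ℝ} {i j : Fin 2} (hij : i ≠ j)
    (hzi : z i ≤ -1) (hzj : 3 * z i + 2 ≤ z j) (hwi : w i = 0) (hwj : w j = 2) :
    w ∈ convexHull ℝ (insert z pentagon) := by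
  obtain ⟨v, hv, hvi, hvj⟩ := exists_mem_pentagon_apply_eq_one_five hij
  have hd : 0 < z j - 5 * z i := by linarith
  have hmem {u} (hu : u ∈ pentagon) : u ∈ convexHull ℝ (insert z pentagon) :=
    subset_convexHull ℝ _ (mem_insert_of_mem z hu)
  have := (convex_convexHull ℝ _).add_smul_mem_of_zero_mem (hmem zero_mem_pentagon)
    (subset_convexHull ℝ _ (mem_insert z _)) (hmem hv)
    (a := 2 / (z j - 5 * z i)) (b := -2 * z i / (z j - 5 * z i)) (by positivity)
    (div_nonneg (by linarith) hd.le) (by rw [← add_div, div_le_one hd]; linarith)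
  convert this using 1
  have hk (k : Fin 2) : k = i ∨ k = j := by omega
  ext k
  rcases hk k with rfl | rfl
  · simp [hwi, hvi]; field_simp; ring
  · simp [hwj, hvj]; field_simp; ring

theorem exists_latticePt_mem_convexHull_insert_pentagon {z : Fin 2 → ℝ}
    (hz : z 0 ≤ -1 ∨ z 1 ≤ -1) :
    ∃ w, IsLatticePt w ∧ w ∈ convexHull ℝ (insert z pentagon) ∧ w ∉ pentagon ∧ w ≠ z := by
  obtain ⟨i, j, hij, hzi, hzj⟩ : ∃ i j : Fin 2, i ≠ j ∧ z i ≤ -1 ∧ 3 * z i + 2 ≤ z j := by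
    by_cases h₀ : z 0 ≤ -1 ∧ 3 * z 0 + 2 ≤ z 1
    · exact ⟨0, 1, by decide, h₀⟩
    · exact ⟨1, 0, by decide, by grind, by grind⟩
  have hwi : (Pi.single j 2 : Fin 2 → ℝ) i = 0 := Pi.single_eq_of_ne hij 2
  refine ⟨Pi.single j 2, fun k ↦ ?_,
    mem_convexHull_insert_pentagon_of_apply hij hzi hzj hwi (by simp), fun hw ↦ ?_, fun hw ↦ ?_⟩
  · by_cases hk : k = j
    · exact ⟨2, by simp [hk]⟩
    · exact ⟨0, by simp [hk]⟩
  · simpa [hwi] using neg_one_le_four_mul_sub_of_mem_pentagon hw hij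
  · linarith [hw ▸ hwi]

/-- The vertex `(0,0)` of the pentagon with vertices `(0,0), (0,1), (1,0), (5,1), (1,5)`
is dark: no lattice point `z` outside the pentagon from which `(0,0)` is visible gives a
quantum jump. -/
theorem stmt_19 :
    ¬∃ z : Fin 2 → ℝ, IsLatticePt z ∧
      z ∉ convexHull ℝ {![(0 : ℝ), 0], ![0, 1], ![1, 0], ![5, 1], ![1, 5]} ∧
      -- the vertex (0,0) is visible from z:
      segment ℝ z ![(0 : ℝ), 0] ∩
          convexHull ℝ {![(0 : ℝ), 0], ![0, 1], ![1, 0], ![5, 1], ![1, 5]} =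
        {![(0 : ℝ), 0]} ∧
      -- (P, conv(P, z)) is a quantum jump:
      {x ∈ convexHull ℝ
          (insert z (convexHull ℝ {![(0 : ℝ), 0], ![0, 1], ![1, 0], ![5, 1], ![1, 5]})) |
        IsLatticePt x} =
        {x ∈ convexHull ℝ {![(0 : ℝ), 0], ![0, 1], ![1, 0], ![5, 1], ![1, 5]} |
          IsLatticePt x} ∪ {z} ∧
      IsNormal (convexHull ℝ
        (insert z (convexHull ℝ {![(0 : ℝ), 0], ![0, 1], ![1, 0], ![5, 1], ![1, 5]}))) := by
  rintro ⟨z, hz, hzP, hvis, hjump, -⟩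
  obtain ⟨w, hw, hwK, hwP, hwz⟩ :=
    exists_latticePt_mem_convexHull_insert_pentagon (coord_le_neg_one_of_visible hz hzP hvis)
  have : w ∈ {x ∈ pentagon | IsLatticePt x} ∪ {z} := hjump ▸ ⟨hwK, hw⟩
  rcases this with ⟨hwP', -⟩ | hwz'
  exacts [hwP hwP', hwz hwz']
end
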